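/- arXiv:2601.02222 — 7 statements merged into one kernel-verified Lean document; each statement's English description precedes it below -/
import Mathlib

section
/- There exist constants L₀ ≥ 1 and C₁ > 0, depending only on d and the coefficients (v̂_k), such that for every integer L ≥ L₀, all α, θ ∈ ℝ, every λ ∈ ℝ, and every nonzero φ ∈ ℓ²(ℤ,ℂ) with ‖(L_{α,θ} − λ)φ‖ ≤ ‖φ‖/L, there exists j ∈ ℤ such that η_{j,L}φ ≠ 0 and ‖(L_{α,θ} − λ)(η_{j,L}φ)‖ ≤ (C₁^{1/2}/L)·‖η_{j,L}φ‖. -/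
/-!
Localize `φ` with the whole family of tents `η_{j,L}`, `j ∈ ℤ`. Since `∑_j η_{j,L}(n)²` lies
between `L/4` and `2L+1` for every `n`, the pieces `η_{j,L}φ` carry total mass
`∑_j ‖η_{j,L}φ‖² ≥ (L/4)‖φ‖²`. On the other hand
`(L_{α,θ} - λ)(η_{j,L}φ) = η_{j,L}(L_{α,θ} - λ)φ + [L_{α,θ}, η_{j,L}]φ`, where the commutator only
sees the hopping part, has range `d`, size `O(d/L)`, and is supported within `L + d` of `j`;
summing over `j` gives `∑_j ‖(L_{α,θ} - λ)(η_{j,L}φ)‖² ≤ (C/L)‖φ‖²`. Hence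
`∑_j ‖(L_{α,θ} - λ)(η_{j,L}φ)‖² ≤ (C₁/L²) ∑_j ‖η_{j,L}φ‖²`, and the inequality must hold for
some single `j` with `η_{j,L}φ ≠ 0`.

The squared norms are summed in `ℝ≥0∞`, where double sums over `j` and `n` commute freely.
-/

open scoped ENNReal
open Finset

noncomputable def eta (j : ℤ) (L : ℕ) (n : ℤ) : ℝ :=
  if |n - j| ≤ (L : ℤ) then 1 - ((|n - j| : ℤ) : ℝ) / (L : ℝ) else 0

theorem enorm_add_sq_le {E : Type*} [SeminormedAddCommGroup E] (x y : E) :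
    ‖x + y‖ₑ ^ 2 ≤ 2 * (‖x‖ₑ ^ 2 + ‖y‖ₑ ^ 2) := by
  simp only [enorm_eq_nnnorm]
  exact_mod_cast (pow_le_pow_left₀ zero_le (nnnorm_add_le x y) 2).trans add_sq_le

theorem enorm_sum_mul_sq_le {ι R : Type*} [SeminormedRing R] (s : Finset ι) (a b : ι → R) :
    ‖∑ i ∈ s, a i * b i‖ₑ ^ 2 ≤ (∑ i ∈ s, ‖a i‖ₑ) * ∑ i ∈ s, ‖a i‖ₑ * ‖b i‖ₑ ^ 2 := by
  simp only [enorm_eq_nnnorm]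
  have hsum : ‖∑ i ∈ s, a i * b i‖₊ ≤ ∑ i ∈ s, ‖a i‖₊ * ‖b i‖₊ :=
    (nnnorm_sum_le _ _).trans (sum_le_sum fun i _ => nnnorm_mul_le _ _)
  have hcs := sum_sq_le_sum_mul_sum_of_sq_le_mul s (r := fun i => ‖a i‖₊ * ‖b i‖₊)
    (g := fun i => ‖a i‖₊ * ‖b i‖₊ ^ 2) (fun _ _ => zero_le) (fun _ _ => zero_le)
    (fun i _ => (by ring : (‖a i‖₊ * ‖b i‖₊) ^ 2 = ‖a i‖₊ * (‖a i‖₊ * ‖b i‖₊ ^ 2)).le)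
  exact_mod_cast (pow_le_pow_left₀ zero_le hsum 2).trans hcs

theorem Complex.enorm_ofReal (x : ℝ) : ‖(x : ℂ)‖ₑ = ‖x‖ₑ := by
  simp only [enorm_eq_nnnorm, Complex.nnnorm_real]

theorem ENNReal.exists_ne_zero_le_mul_of_tsum_le {ι : Type*} {f g : ι → ℝ≥0∞} {c : ℝ≥0∞}
    (hf₀ : ∑' i, f i ≠ 0) (hf : ∑' i, f i ≠ ∞) (h : ∑' i, g i ≤ c * ∑' i, f i) :
    ∃ i, f i ≠ 0 ∧ g i ≤ c * f i := by
  obtain ⟨i₀, hi₀⟩ : ∃ i, f i ≠ 0 := by simpa [ENNReal.tsum_eq_zero] using hf₀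
  by_cases hc : c = ∞
  · exact ⟨i₀, hi₀, by simp [hc, hi₀]⟩
  by_contra! H
  have hlt : ∑' i, c * f i < ∑' i, g i :=
    ENNReal.tsum_lt_tsum (by rw [ENNReal.tsum_mul_left]; exact ENNReal.mul_ne_top hc hf)
      (fun i => if hi : f i = 0 then by simp [hi] else (H i hi).le) (H i₀ hi₀)
  rw [ENNReal.tsum_mul_left] at hlt
  exact hlt.not_ge h

theorem lp.enorm_sq_eq_tsum {ι E : Type*} [NormedAddCommGroup E] (f : lp (fun _ : ι => E) 2) :
    ‖f‖ₑ ^ 2 = ∑' i, ‖f i‖ₑ ^ 2 := by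
  have h := lp.hasSum_norm (p := 2) (by norm_num) f
  simp only [ENNReal.toReal_ofNat, Real.rpow_two] at h
  simp only [← ofReal_norm, ← ENNReal.ofReal_pow (norm_nonneg _)]
  rw [← ENNReal.ofReal_tsum_of_nonneg (fun _ => by positivity) h.summable, h.tsum_eq]

theorem natCast_sq_mul_enorm_sq_le_iff {E F : Type*} [SeminormedAddCommGroup E]
    [SeminormedAddCommGroup F] {L : ℕ} (hL : 0 < L) {b : ℝ} (hb : 0 ≤ b) (x : E) (y : F) :
    (L : ℝ≥0∞) ^ 2 * ‖x‖ₑ ^ 2 ≤ ENNReal.ofReal b ^ 2 * ‖y‖ₑ ^ 2 ↔ ‖x‖ ≤ b / L * ‖y‖ := by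
  rw [← ENNReal.ofReal_natCast, ← ofReal_norm, ← ofReal_norm, ← ENNReal.ofReal_pow hb,
    ← ENNReal.ofReal_pow (Nat.cast_nonneg _), ← ENNReal.ofReal_pow (norm_nonneg _),
    ← ENNReal.ofReal_pow (norm_nonneg _), ← ENNReal.ofReal_mul (by positivity),
    ← ENNReal.ofReal_mul (by positivity), ← mul_pow, ← mul_pow,
    ENNReal.ofReal_le_ofReal_iff (by positivity),
    pow_le_pow_iff_left₀ (by positivity) (by positivity) two_ne_zero, div_mul_eq_mul_div,
    le_div_iff₀' (by positivity)]

section Window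

variable {f : ℤ → ℝ≥0∞} {c : ℝ≥0∞} (n : ℤ) (R : ℕ)

theorem Int.mem_Icc_sub_add_iff {j : ℤ} : j ∈ Icc (n - R) (n + R) ↔ |n - j| ≤ R := by
  rw [mem_Icc, abs_le]; omega

theorem Int.card_Icc_sub_add : #(Icc (n - R) (n + R)) = 2 * R + 1 := by
  rw [Int.card_Icc]; omega

theorem tsum_le_of_window (hle : ∀ j, f j ≤ c) (hzero : ∀ j, (R : ℤ) < |n - j| → f j = 0) :
    ∑' j, f j ≤ (2 * R + 1) * c := by
  rw [tsum_eq_sum (s := Icc (n - R) (n + R)) fun j hj =>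
    hzero j (not_le.mp ((Int.mem_Icc_sub_add_iff n R).not.mp hj))]
  calc ∑ j ∈ Icc (n - R) (n + R), f j ≤ #(Icc (n - R) (n + R)) • c :=
        sum_le_card_nsmul _ _ _ fun j _ => hle j
    _ = (2 * R + 1) * c := by rw [Int.card_Icc_sub_add, nsmul_eq_mul]; push_cast; rfl

theorem le_tsum_of_window (hle : ∀ j, |n - j| ≤ R → c ≤ f j) :
    (2 * R + 1) * c ≤ ∑' j, f j :=
  calc (2 * R + 1) * c = #(Icc (n - R) (n + R)) • c := by
        rw [Int.card_Icc_sub_add, nsmul_eq_mul]; push_cast; rfl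
    _ ≤ ∑ j ∈ Icc (n - R) (n + R), f j :=
        card_nsmul_le_sum _ _ _ fun j hj => hle j ((Int.mem_Icc_sub_add_iff n R).mp hj)
    _ ≤ ∑' j, f j := ENNReal.sum_le_tsum _

end Window

section Cutoff

theorem eta_nonneg (j : ℤ) (L : ℕ) (n : ℤ) : 0 ≤ eta j L n := by
  unfold eta
  split_ifs with h
  · have : ((|n - j| : ℤ) : ℝ) / L ≤ 1 :=
      div_le_one_of_le₀ (by exact_mod_cast h) (Nat.cast_nonneg L)
    linarith
  · exact le_rfl

theorem eta_le_one (j : ℤ) (L : ℕ) (n : ℤ) : eta j L n ≤ 1 := by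
  unfold eta
  split_ifs
  · have : 0 ≤ ((|n - j| : ℤ) : ℝ) / L := by positivity
    linarith
  · exact zero_le_one

theorem eta_eq_zero_of_lt {j n : ℤ} {L : ℕ} (h : (L : ℤ) < |n - j|) : eta j L n = 0 := if_neg h.not_ge

theorem half_le_eta {j n : ℤ} {L : ℕ} (h : 2 * |n - j| ≤ L) : 1 / 2 ≤ eta j L n := by
  have hle : |n - j| ≤ L := by have := abs_nonneg (n - j); omega
  rw [eta, if_pos hle]
  rcases Nat.eq_zero_or_pos L with rfl | hL
  · norm_num
  · have h' : 2 * ((|n - j| : ℤ) : ℝ) ≤ L := by exact_mod_cast h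
    have : ((|n - j| : ℤ) : ℝ) / L ≤ 1 / 2 := by
      rw [div_le_iff₀ (by positivity)]; linarith
    linarith

theorem mul_eta_eq (j : ℤ) (L : ℕ) (n : ℤ) :
    (L : ℝ) * eta j L n = max ((L : ℝ) - ((|n - j| : ℤ) : ℝ)) 0 := by
  unfold eta
  split_ifs with h
  · have h' : ((|n - j| : ℤ) : ℝ) ≤ L := by exact_mod_cast h
    rw [max_eq_left (by linarith)]
    rcases Nat.eq_zero_or_pos L with rfl | hL
    · have : ((|n - j| : ℤ) : ℝ) = 0 := by exact_mod_cast le_antisymm h (abs_nonneg _)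
      simp [this]
    · field_simp
  · have h' : (L : ℝ) < ((|n - j| : ℤ) : ℝ) := by exact_mod_cast not_le.mp h
    rw [max_eq_right (by linarith), mul_zero]

theorem mul_abs_eta_sub_eta_le (j : ℤ) (L : ℕ) (a b : ℤ) :
    (L : ℝ) * |eta j L a - eta j L b| ≤ ((|a - b| : ℤ) : ℝ) :=
  calc (L : ℝ) * |eta j L a - eta j L b| = |L * eta j L a - L * eta j L b| := by
        rw [← mul_sub, abs_mul, Nat.abs_cast]
    _ ≤ |((L : ℝ) - ((|a - j| : ℤ) : ℝ)) - ((L : ℝ) - ((|b - j| : ℤ) : ℝ))| := by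
        rw [mul_eta_eq, mul_eta_eq]; exact abs_max_sub_max_le_abs _ _ _
    _ = ((|(|b - j| - |a - j|)| : ℤ) : ℝ) := by push_cast; ring_nf
    _ ≤ ((|a - b| : ℤ) : ℝ) := by
        have := abs_abs_sub_abs_le_abs_sub (b - j) (a - j)
        rw [sub_sub_sub_cancel_right, abs_sub_comm b a] at this
        exact_mod_cast this

theorem enorm_eta_le_one (j : ℤ) (L : ℕ) (n : ℤ) : ‖eta j L n‖ₑ ≤ 1 := by
  rw [Real.enorm_of_nonneg (eta_nonneg j L n), ← ENNReal.ofReal_one]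
  exact ENNReal.ofReal_le_ofReal (eta_le_one j L n)

theorem tsum_enorm_eta_sq_le (L : ℕ) (n : ℤ) : ∑' j, ‖eta j L n‖ₑ ^ 2 ≤ 2 * L + 1 := by
  simpa using tsum_le_of_window n L (c := 1)
    (fun j => pow_le_one₀ zero_le (enorm_eta_le_one j L n))
    (fun j h => by simp [eta_eq_zero_of_lt h])

theorem le_four_mul_tsum_enorm_eta_sq (L : ℕ) (n : ℤ) :
    (L : ℝ≥0∞) ≤ 4 * ∑' j, ‖eta j L n‖ₑ ^ 2 := by
  rw [← ENNReal.tsum_mul_left]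
  calc (L : ℝ≥0∞) ≤ (2 * (L / 2 : ℕ) + 1) * 1 := by norm_cast; omega
    _ ≤ ∑' j, 4 * ‖eta j L n‖ₑ ^ 2 := le_tsum_of_window n (L / 2) fun j hj => ?_
  have hhalf := half_le_eta (j := j) (n := n) (L := L) (by omega)
  rw [Real.enorm_of_nonneg (eta_nonneg j L n), ← ENNReal.ofReal_pow (eta_nonneg j L n),
    ← ENNReal.ofReal_ofNat 4, ← ENNReal.ofReal_mul (by norm_num), ← ENNReal.ofReal_one]
  exact ENNReal.ofReal_le_ofReal (by nlinarith)

theorem tsum_tsum_enorm_eta_mul_sq_le (L : ℕ) (u : ℤ → ℂ) :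
    ∑' j, ∑' n, ‖(eta j L n : ℂ) * u n‖ₑ ^ 2 ≤ (2 * L + 1) * ∑' n, ‖u n‖ₑ ^ 2 := by
  simp only [enorm_mul, Complex.enorm_ofReal, mul_pow]
  rw [ENNReal.tsum_comm, ← ENNReal.tsum_mul_left]
  gcongr with n
  rw [ENNReal.tsum_mul_right]
  gcongr
  exact tsum_enorm_eta_sq_le L n

theorem le_four_mul_tsum_tsum_enorm_eta_mul_sq (L : ℕ) (u : ℤ → ℂ) :
    L * ∑' n, ‖u n‖ₑ ^ 2 ≤ 4 * ∑' j, ∑' n, ‖(eta j L n : ℂ) * u n‖ₑ ^ 2 := by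
  simp only [enorm_mul, Complex.enorm_ofReal, mul_pow]
  rw [ENNReal.tsum_comm, ← ENNReal.tsum_mul_left, ← ENNReal.tsum_mul_left]
  refine ENNReal.tsum_le_tsum fun n => ?_
  rw [ENNReal.tsum_mul_right, ← mul_assoc]
  gcongr ?_ * _
  exact le_four_mul_tsum_enorm_eta_sq L n

theorem sq_mul_tsum_enorm_eta_sub_sq_le {d : ℕ} {k : ℤ} (hk : |k| ≤ d) (L : ℕ) (n : ℤ) :
    (L : ℝ≥0∞) ^ 2 * ∑' j, ‖eta j L (n - k) - eta j L n‖ₑ ^ 2 ≤ (2 * (L + d) + 1) * d ^ 2 := by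
  rw [← ENNReal.tsum_mul_left]
  have := tsum_le_of_window n (L + d) (c := (d : ℝ≥0∞) ^ 2)
    (f := fun j => (L : ℝ≥0∞) ^ 2 * ‖eta j L (n - k) - eta j L n‖ₑ ^ 2) (fun j => ?_)
    (fun j hj => ?_)
  · simpa using this
  · rw [← mul_pow]
    gcongr
    rw [Real.enorm_eq_ofReal_abs, ← ENNReal.ofReal_natCast,
      ← ENNReal.ofReal_mul (Nat.cast_nonneg _), ← ENNReal.ofReal_natCast d]
    refine ENNReal.ofReal_le_ofReal ((mul_abs_eta_sub_eta_le j L _ _).trans ?_)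
    rw [sub_sub_cancel_left, abs_neg]
    exact_mod_cast hk
  · have htri : |n - j| ≤ |n - k - j| + |k| :=
      (congrArg abs (by ring)).trans_le (abs_add_le (n - k - j) k)
    push_cast at hj
    rw [eta_eq_zero_of_lt (by linarith), eta_eq_zero_of_lt (by linarith)]
    simp

theorem memℓp_eta_mul {p : ℝ≥0∞} (j : ℤ) (L : ℕ) (φ : lp (fun _ : ℤ => ℂ) p) :
    Memℓp (fun n => (eta j L n : ℂ) * φ n) p :=
  (lp.memℓp φ).mono' fun n => by
    rw [norm_mul, Complex.norm_real, Real.norm_of_nonneg (eta_nonneg j L n)]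
    exact mul_le_of_le_one_left (norm_nonneg _) (eta_le_one j L n)

end Cutoff

def bandOp (I : Finset ℤ) (v a u : ℤ → ℂ) (n : ℤ) : ℂ :=
  ∑ k ∈ I, v k * u (n - k) + a n * u n

section BandOperator

variable (I : Finset ℤ) (v a : ℤ → ℂ)

theorem bandOp_ofReal_mul (η : ℤ → ℝ) (u : ℤ → ℂ) (n : ℤ) :
    bandOp I v a (fun m => η m * u m) n =
      η n * bandOp I v a u n + ∑ k ∈ I, v k * (((η (n - k) - η n : ℝ) : ℂ) * u (n - k)) := by
  simp only [bandOp, mul_add, mul_sum, Complex.ofReal_sub]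
  rw [add_right_comm, ← sum_add_distrib]
  congr 1
  · exact sum_congr rfl fun k _ => by ring
  · ring

theorem sq_mul_tsum_tsum_enorm_commutator_sq_le {d : ℕ} (hI : ∀ k ∈ I, |k| ≤ d) (L : ℕ)
    (u : ℤ → ℂ) :
    (L : ℝ≥0∞) ^ 2 * ∑' j, ∑' n,
        ‖∑ k ∈ I, v k * (((eta j L (n - k) - eta j L n : ℝ) : ℂ) * u (n - k))‖ₑ ^ 2 ≤
      (2 * (L + d) + 1) * ((∑ k ∈ I, ‖v k‖ₑ) * d) ^ 2 * ∑' n, ‖u n‖ₑ ^ 2 := by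
  set V := ∑ k ∈ I, ‖v k‖ₑ
  have hshift (k : ℤ) : ∑' n, ‖u (n - k)‖ₑ ^ 2 = ∑' n, ‖u n‖ₑ ^ 2 :=
    (Equiv.subRight k).tsum_eq fun n => ‖u n‖ₑ ^ 2
  calc (L : ℝ≥0∞) ^ 2 * ∑' j, ∑' n,
        ‖∑ k ∈ I, v k * (((eta j L (n - k) - eta j L n : ℝ) : ℂ) * u (n - k))‖ₑ ^ 2
      ≤ (L : ℝ≥0∞) ^ 2 * ∑' j, ∑' n, V * ∑ k ∈ I,
          ‖v k‖ₑ * (‖eta j L (n - k) - eta j L n‖ₑ ^ 2 * ‖u (n - k)‖ₑ ^ 2) := by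
        gcongr with j n
        refine (enorm_sum_mul_sq_le I _ _).trans_eq ?_
        simp only [enorm_mul, Complex.enorm_ofReal, mul_pow, V]
    _ = V * ∑ k ∈ I, ‖v k‖ₑ * ∑' n,
          ((L : ℝ≥0∞) ^ 2 * ∑' j, ‖eta j L (n - k) - eta j L n‖ₑ ^ 2) * ‖u (n - k)‖ₑ ^ 2 := by
        simp only [mul_sum, ← ENNReal.tsum_mul_left, ← ENNReal.tsum_mul_right]
        rw [ENNReal.tsum_comm]
        simp only [Summable.tsum_finsetSum fun _ _ => ENNReal.summable]
        exact sum_congr rfl fun k _ => tsum_congr fun n => tsum_congr fun j => by ring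
    _ ≤ V * ∑ k ∈ I, ‖v k‖ₑ * ∑' n, ((2 * (L + d) + 1) * d ^ 2) * ‖u (n - k)‖ₑ ^ 2 := by
        gcongr V * ∑ k ∈ I, _ * ∑' n, ?_ * _ with k hk n
        exact sq_mul_tsum_enorm_eta_sub_sq_le (hI k hk) L n
    _ = _ := by
        simp only [ENNReal.tsum_mul_left, hshift, ← sum_mul, V]
        ring

theorem sq_mul_tsum_tsum_enorm_bandOp_eta_mul_sq_le {d : ℕ} (hI : ∀ k ∈ I, |k| ≤ d) (L : ℕ)
    (u : ℤ → ℂ) :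
    (L : ℝ≥0∞) ^ 2 * ∑' j, ∑' n, ‖bandOp I v a (fun m => eta j L m * u m) n‖ₑ ^ 2 ≤
      2 * ((2 * L + 1) * ((L : ℝ≥0∞) ^ 2 * ∑' n, ‖bandOp I v a u n‖ₑ ^ 2) +
        (2 * (L + d) + 1) * ((∑ k ∈ I, ‖v k‖ₑ) * d) ^ 2 * ∑' n, ‖u n‖ₑ ^ 2) :=
  calc (L : ℝ≥0∞) ^ 2 * ∑' j, ∑' n, ‖bandOp I v a (fun m => eta j L m * u m) n‖ₑ ^ 2
      ≤ (L : ℝ≥0∞) ^ 2 * ∑' j, ∑' n, 2 * (‖(eta j L n : ℂ) * bandOp I v a u n‖ₑ ^ 2 +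
          ‖∑ k ∈ I, v k * (((eta j L (n - k) - eta j L n : ℝ) : ℂ) * u (n - k))‖ₑ ^ 2) := by
        gcongr with j n
        rw [bandOp_ofReal_mul]
        exact enorm_add_sq_le _ _
    _ = 2 * ((L : ℝ≥0∞) ^ 2 * ∑' j, ∑' n, ‖(eta j L n : ℂ) * bandOp I v a u n‖ₑ ^ 2 +
          (L : ℝ≥0∞) ^ 2 * ∑' j, ∑' n,
            ‖∑ k ∈ I, v k * (((eta j L (n - k) - eta j L n : ℝ) : ℂ) * u (n - k))‖ₑ ^ 2) := by
        simp only [ENNReal.tsum_mul_left, ENNReal.tsum_add]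
        ring
    _ ≤ _ := by
        gcongr 2 * (?_ + ?_)
        · rw [mul_left_comm]
          gcongr _ * ?_
          exact tsum_tsum_enorm_eta_mul_sq_le L _
        · exact sq_mul_tsum_tsum_enorm_commutator_sq_le I v hI L u

theorem sq_mul_tsum_tsum_enorm_bandOp_eta_mul_sq_le_of_le {d L : ℕ} (hI : ∀ k ∈ I, |k| ≤ d)
    (hL : 1 ≤ L) (u : ℤ → ℂ)
    (hu : (L : ℝ≥0∞) ^ 2 * ∑' n, ‖bandOp I v a u n‖ₑ ^ 2 ≤ ∑' n, ‖u n‖ₑ ^ 2) :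
    (L : ℝ≥0∞) ^ 2 * ∑' j, ∑' n, ‖bandOp I v a (fun m => eta j L m * u m) n‖ₑ ^ 2 ≤
      4 * (6 + 2 * (2 * d + 3) * ((∑ k ∈ I, ‖v k‖ₑ) * d) ^ 2) *
        ∑' j, ∑' n, ‖(eta j L n : ℂ) * u n‖ₑ ^ 2 := by
  set W := ((∑ k ∈ I, ‖v k‖ₑ) * d) ^ 2
  set X := ∑' n, ‖u n‖ₑ ^ 2
  have h₁ : (2 * (2 * L + 1) : ℝ≥0∞) ≤ 6 * L := by norm_cast; omega
  have h₂ : (2 * (L + d) + 1 : ℝ≥0∞) ≤ (2 * d + 3) * L := by norm_cast; nlinarith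
  calc (L : ℝ≥0∞) ^ 2 * ∑' j, ∑' n, ‖bandOp I v a (fun m => eta j L m * u m) n‖ₑ ^ 2
      ≤ 2 * ((2 * L + 1) * ((L : ℝ≥0∞) ^ 2 * ∑' n, ‖bandOp I v a u n‖ₑ ^ 2) +
          (2 * (L + d) + 1) * W * X) :=
        sq_mul_tsum_tsum_enorm_bandOp_eta_mul_sq_le I v a hI L u
    _ ≤ 2 * ((2 * L + 1) * X + (2 * (L + d) + 1) * W * X) := by gcongr
    _ = 2 * (2 * L + 1) * X + 2 * ((2 * (L + d) + 1) * W * X) := by ring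
    _ ≤ 6 * L * X + 2 * ((2 * d + 3) * L * W * X) := by gcongr
    _ = (6 + 2 * (2 * d + 3) * W) * (L * X) := by ring
    _ ≤ (6 + 2 * (2 * d + 3) * W) * (4 * ∑' j, ∑' n, ‖(eta j L n : ℂ) * u n‖ₑ ^ 2) := by
        gcongr _ * ?_
        exact le_four_mul_tsum_tsum_enorm_eta_mul_sq L u
    _ = _ := by ring

theorem exists_sq_mul_tsum_enorm_bandOp_eta_mul_sq_le {d L : ℕ} (hI : ∀ k ∈ I, |k| ≤ d)
    (hL : 1 ≤ L) {u : ℤ → ℂ} (hu₀ : ∑' n, ‖u n‖ₑ ^ 2 ≠ 0) (hu_fin : ∑' n, ‖u n‖ₑ ^ 2 ≠ ∞)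
    (hu : (L : ℝ≥0∞) ^ 2 * ∑' n, ‖bandOp I v a u n‖ₑ ^ 2 ≤ ∑' n, ‖u n‖ₑ ^ 2) :
    ∃ j, ∑' n, ‖(eta j L n : ℂ) * u n‖ₑ ^ 2 ≠ 0 ∧
      (L : ℝ≥0∞) ^ 2 * ∑' n, ‖bandOp I v a (fun m => eta j L m * u m) n‖ₑ ^ 2 ≤
        4 * (6 + 2 * (2 * d + 3) * ((∑ k ∈ I, ‖v k‖ₑ) * d) ^ 2) *
          ∑' n, ‖(eta j L n : ℂ) * u n‖ₑ ^ 2 := by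
  refine ENNReal.exists_ne_zero_le_mul_of_tsum_le (fun h => ?_)
    (ne_top_of_le_ne_top (by finiteness) (tsum_tsum_enorm_eta_mul_sq_le L u)) ?_
  · have := le_four_mul_tsum_tsum_enorm_eta_mul_sq L u
    rw [h, mul_zero, nonpos_iff_eq_zero, mul_eq_zero, Nat.cast_eq_zero] at this
    exact this.elim (by omega) hu₀
  · rw [ENNReal.tsum_mul_left]
    exact sq_mul_tsum_tsum_enorm_bandOp_eta_mul_sq_le_of_le I v a hI hL u hu

end BandOperator

theorem localized_approximate_eigenfunction_general
    (d : ℕ)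
    (vhat : ℤ → ℂ)
    (w : ℝ → ℝ)
    (Lop : ℝ → ℝ → (lp (fun _ : ℤ => ℂ) 2 →L[ℂ] lp (fun _ : ℤ => ℂ) 2))
    (hLop : ∀ (α θ : ℝ) (u : lp (fun _ : ℤ => ℂ) 2) (n : ℤ),
      (Lop α θ u : ∀ _ : ℤ, ℂ) n
        = (∑ k ∈ Finset.Icc (-(d : ℤ)) (d : ℤ), vhat k * (u : ∀ _ : ℤ, ℂ) (n - k))
          + (w (θ + (n : ℝ) * α) : ℂ) * (u : ∀ _ : ℤ, ℂ) n) :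
    ∃ L₀ : ℕ, 1 ≤ L₀ ∧ ∃ C₁ > (0 : ℝ), ∀ L : ℕ, L₀ ≤ L →
      ∀ (α θ lam : ℝ) (φ : lp (fun _ : ℤ => ℂ) 2), φ ≠ 0 →
        ‖Lop α θ φ - (lam : ℂ) • φ‖ ≤ ‖φ‖ / (L : ℝ) →
        ∃ j : ℤ, ∃ ψ : lp (fun _ : ℤ => ℂ) 2,
          (∀ n : ℤ, (ψ : ∀ _ : ℤ, ℂ) n = (eta j L n : ℂ) * (φ : ∀ _ : ℤ, ℂ) n) ∧
          ψ ≠ 0 ∧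
          ‖Lop α θ ψ - (lam : ℂ) • ψ‖ ≤ Real.sqrt C₁ / (L : ℝ) * ‖ψ‖ := by
  set I := Icc (-(d : ℤ)) d
  set C : ℝ≥0∞ := 4 * (6 + 2 * (2 * d + 3) * ((∑ k ∈ I, ‖vhat k‖ₑ) * d) ^ 2)
  have hC : C ≠ ∞ := by
    have : ∑ k ∈ I, ‖vhat k‖ₑ ≠ ∞ := ENNReal.sum_ne_top.mpr fun k _ => enorm_ne_top
    finiteness
  refine ⟨1, le_rfl, C.toReal, ENNReal.toReal_pos (by simp [C]) hC, ?_⟩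
  intro L hL α θ lam φ hφ hsmall
  have hD (x : lp (fun _ : ℤ => ℂ) 2) (n : ℤ) :
      (Lop α θ x - (lam : ℂ) • x : lp (fun _ : ℤ => ℂ) 2) n =
        bandOp I vhat (fun m => w (θ + m * α) - lam) x n := by
    simp only [bandOp, lp.coeFn_sub, lp.coeFn_smul, Pi.sub_apply, Pi.smul_apply, hLop,
      smul_eq_mul]
    ring
  have hφD :
      (L : ℝ≥0∞) ^ 2 * ‖Lop α θ φ - (lam : ℂ) • φ‖ₑ ^ 2 ≤ ENNReal.ofReal 1 ^ 2 * ‖φ‖ₑ ^ 2 :=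
    (natCast_sq_mul_enorm_sq_le_iff hL zero_le_one _ φ).mpr (by rwa [one_div_mul_eq_div])
  simp only [ENNReal.ofReal_one, one_pow, one_mul, lp.enorm_sq_eq_tsum, hD] at hφD
  obtain ⟨j, hj₀, hj⟩ := exists_sq_mul_tsum_enorm_bandOp_eta_mul_sq_le I vhat _
    (fun k hk => abs_le.mpr (mem_Icc.mp hk)) hL (u := φ)
    (by simpa [← lp.enorm_sq_eq_tsum] using hφ) (by simp [← lp.enorm_sq_eq_tsum]) hφD
  let ψ : lp (fun _ : ℤ => ℂ) 2 := ⟨_, memℓp_eta_mul j L φ⟩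
  refine ⟨j, ψ, fun n => rfl, fun h => hj₀ ((lp.enorm_sq_eq_tsum ψ).symm.trans (by simp [h])), ?_⟩
  rw [← natCast_sq_mul_enorm_sq_le_iff hL (Real.sqrt_nonneg _), ← ENNReal.ofReal_pow
    (Real.sqrt_nonneg _), Real.sq_sqrt ENNReal.toReal_nonneg, ENNReal.ofReal_toReal hC,
    lp.enorm_sq_eq_tsum, lp.enorm_sq_eq_tsum]
  simpa only [hD] using hj

/-- Localization of approximate eigenfunctions: there exist `L₀ ≥ 1` and `C₁ > 0`,
depending only on `d` and the coefficients `v̂`, such that for every `L ≥ L₀`,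
all `α, θ, λ` and every nonzero `φ` with `‖(L_{α,θ}-λ)φ‖ ≤ ‖φ‖/L`, there is `j ∈ ℤ`
such that `η_{j,L}φ ≠ 0` and `‖(L_{α,θ}-λ)(η_{j,L}φ)‖ ≤ (C₁^{1/2}/L)‖η_{j,L}φ‖`. -/
theorem localized_approximate_eigenfunction
    (d : ℕ) (hd : 1 ≤ d)
    (vhat : ℤ → ℂ) (hv : ∀ k : ℤ, vhat (-k) = starRingEnd ℂ (vhat k))
    (w : ℝ → ℝ) (hw : ContDiff ℝ 1 w) (hwper : Function.Periodic w 1)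
    (Lop : ℝ → ℝ → (lp (fun _ : ℤ => ℂ) 2 →L[ℂ] lp (fun _ : ℤ => ℂ) 2))
    (hLop : ∀ (α θ : ℝ) (u : lp (fun _ : ℤ => ℂ) 2) (n : ℤ),
      (Lop α θ u : ∀ _ : ℤ, ℂ) n
        = (∑ k ∈ Finset.Icc (-(d : ℤ)) (d : ℤ), vhat k * (u : ∀ _ : ℤ, ℂ) (n - k))
          + (w (θ + (n : ℝ) * α) : ℂ) * (u : ∀ _ : ℤ, ℂ) n) :
    ∃ L₀ : ℕ, 1 ≤ L₀ ∧ ∃ C₁ > (0 : ℝ), ∀ L : ℕ, L₀ ≤ L →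
      ∀ (α θ lam : ℝ) (φ : lp (fun _ : ℤ => ℂ) 2), φ ≠ 0 →
        ‖Lop α θ φ - (lam : ℂ) • φ‖ ≤ ‖φ‖ / (L : ℝ) →
        ∃ j : ℤ, ∃ ψ : lp (fun _ : ℤ => ℂ) 2,
          (∀ n : ℤ, (ψ : ∀ _ : ℤ, ℂ) n = (eta j L n : ℂ) * (φ : ∀ _ : ℤ, ℂ) n) ∧
          ψ ≠ 0 ∧
          ‖Lop α θ ψ - (lam : ℂ) • ψ‖ ≤ Real.sqrt C₁ / (L : ℝ) * ‖ψ‖ :=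
  localized_approximate_eigenfunction_general d vhat w Lop hLop
end

section
/- Let α, α', θ ∈ ℝ, j ∈ ℤ, and let L ≥ 1 be an integer; set θ' = θ + j(α − α'). Then for every ψ ∈ ℓ²(ℤ,ℂ) with ψ(n) = 0 whenever |n − j| > L, one has ‖(L_{α',θ'} − L_{α,θ})ψ‖ ≤ ‖w'‖_∞ · L · |α − α'| · ‖ψ‖, where ‖w'‖_∞ = sup_{x∈ℝ}|w'(x)|. -/
/-!
The convolution parts of the two operators cancel, so the difference acts on `ψ` as
multiplication by `w (θ' + n α') - w (θ + n α)`. The two phases differ by `(j - n) (α - α')`,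
which is at most `L |α - α'|` on the support of `ψ`, and the mean value theorem (with `w'`
bounded, being continuous and periodic) turns this into the bound `‖w'‖_∞ L |α - α'|`.
-/

open scoped ENNReal NNReal

theorem Function.Periodic.deriv {f : ℝ → ℝ} {c : ℝ} (hf : Function.Periodic f c) :
    Function.Periodic (deriv f) c := fun x => by
  rw [← deriv_comp_add_const, hf.funext]

theorem ContDiff.bddAbove_range_abs_deriv_of_periodic {w : ℝ → ℝ} {c : ℝ}
    (hw : ContDiff ℝ 1 w) (hper : Function.Periodic w c) (hc : c ≠ 0) :
    BddAbove (Set.range fun x => |deriv w x|) := by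
  obtain ⟨C, hC⟩ := isBounded_iff_forall_norm_le.mp
    (hper.deriv.isBounded_of_continuous hc (hw.continuous_deriv le_rfl))
  exact ⟨C, by rintro _ ⟨x, rfl⟩; exact hC _ ⟨x, rfl⟩⟩

theorem abs_sub_le_iSup_abs_deriv_mul {w : ℝ → ℝ} (hw : Differentiable ℝ w)
    (hbdd : BddAbove (Set.range fun x => |deriv w x|)) (a b : ℝ) :
    |w a - w b| ≤ (⨆ x, |deriv w x|) * |a - b| :=
  Convex.norm_image_sub_le_of_norm_deriv_le (fun x _ => hw x)
    (fun x _ => le_ciSup hbdd x) convex_univ (Set.mem_univ b) (Set.mem_univ a)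

theorem lp.norm_le_mul_norm_of_forall_norm_le {α : Type*} {E : α → Type*}
    [∀ i, NormedAddCommGroup (E i)] {p : ℝ≥0∞} [Fact (1 ≤ p)] {C : ℝ} (hC : 0 ≤ C)
    {f g : lp E p} (hfg : ∀ i, ‖f i‖ ≤ C * ‖g i‖) : ‖f‖ ≤ C * ‖g‖ := by
  rcases eq_or_ne p ∞ with rfl | hinf
  · exact lp.norm_le_of_forall_le (by positivity) fun i =>
      (hfg i).trans (mul_le_mul_of_nonneg_left (lp.norm_apply_le_norm ENNReal.top_ne_zero g i) hC)
  have hp : 0 < p.toReal :=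
    ENNReal.toReal_pos (zero_lt_one.trans_le Fact.out).ne' hinf
  refine lp.norm_le_of_tsum_le hp (by positivity) ?_
  calc ∑' i, ‖f i‖ ^ p.toReal
      ≤ ∑' i, C ^ p.toReal * ‖g i‖ ^ p.toReal := by
        refine Summable.tsum_le_tsum (fun i => ?_) ((lp.memℓp f).summable hp)
          (((lp.memℓp g).summable hp).mul_left _)
        rw [← Real.mul_rpow hC (norm_nonneg _)]
        exact Real.rpow_le_rpow (norm_nonneg _) (hfg i) hp.le
    _ = (C * ‖g‖) ^ p.toReal := by
        rw [tsum_mul_left, ← lp.norm_rpow_eq_tsum hp, Real.mul_rpow hC (norm_nonneg _)]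

theorem frequency_comparison_on_localized_general
    (d : ℕ)
    (vhat : ℤ → ℂ)
    (w : ℝ → ℝ) (hw : ContDiff ℝ 1 w) (hwper : Function.Periodic w 1)
    (Lop : ℝ → ℝ → (lp (fun _ : ℤ => ℂ) 2 →L[ℂ] lp (fun _ : ℤ => ℂ) 2))
    (hLop : ∀ (α θ : ℝ) (u : lp (fun _ : ℤ => ℂ) 2) (n : ℤ),
      (Lop α θ u : ∀ _ : ℤ, ℂ) n
        = (∑ k ∈ Finset.Icc (-(d : ℤ)) (d : ℤ), vhat k * (u : ∀ _ : ℤ, ℂ) (n - k))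
          + (w (θ + (n : ℝ) * α) : ℂ) * (u : ∀ _ : ℤ, ℂ) n) :
    ∀ (α α' θ : ℝ) (j : ℤ) (L : ℕ), 1 ≤ L →
      ∀ ψ : lp (fun _ : ℤ => ℂ) 2,
        (∀ n : ℤ, (L : ℤ) < |n - j| → (ψ : ∀ _ : ℤ, ℂ) n = 0) →
        ‖Lop α' (θ + (j : ℝ) * (α - α')) ψ - Lop α θ ψ‖
          ≤ (⨆ x : ℝ, |deriv w x|) * (L : ℝ) * |α - α'| * ‖ψ‖ := by
  intro α α' θ j L _ ψ hsupp
  have hbdd := hw.bddAbove_range_abs_deriv_of_periodic hwper one_ne_zero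
  have hM : 0 ≤ ⨆ x, |deriv w x| := (abs_nonneg _).trans (le_ciSup hbdd 0)
  refine lp.norm_le_mul_norm_of_forall_norm_le (by positivity) fun n => ?_
  have hdiff : ((Lop α' (θ + j * (α - α')) ψ - Lop α θ ψ : lp (fun _ : ℤ => ℂ) 2) : ∀ _ : ℤ, ℂ) n
      = ((w (θ + n * α + (j - n) * (α - α')) - w (θ + n * α) : ℝ) : ℂ) * ψ n := by
    simp only [lp.coeFn_sub, Pi.sub_apply, hLop]
    push_cast
    ring_nf
  rw [hdiff, norm_mul, Complex.norm_real, Real.norm_eq_abs]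
  by_cases hn : (L : ℤ) < |n - j|
  · simp [hsupp n hn]
  have hjn : |(j : ℝ) - n| ≤ L := by
    rw [abs_sub_comm]; exact_mod_cast not_lt.mp hn
  refine mul_le_mul_of_nonneg_right ?_ (norm_nonneg _)
  calc |w (θ + n * α + (j - n) * (α - α')) - w (θ + n * α)|
      ≤ (⨆ x, |deriv w x|) * |(j - n) * (α - α')| := by
        simpa only [add_sub_cancel_left] using
          abs_sub_le_iSup_abs_deriv_mul (hw.differentiable one_ne_zero) hbdd
            (θ + n * α + (j - n) * (α - α')) (θ + n * α)
    _ ≤ (⨆ x, |deriv w x|) * (L * |α - α'|) := by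
        rw [abs_mul]; gcongr
    _ = _ := by ring

/-- Phase-adjusted comparison of the operators at two frequencies on functions
supported in `[j-L, j+L]`:
`‖(L_{α',θ'} − L_{α,θ})ψ‖ ≤ ‖w'‖_∞ · L · |α − α'| · ‖ψ‖` where `θ' = θ + j(α − α')`. -/
theorem frequency_comparison_on_localized
    (d : ℕ) (hd : 1 ≤ d)
    (vhat : ℤ → ℂ) (hv : ∀ k : ℤ, vhat (-k) = starRingEnd ℂ (vhat k))
    (w : ℝ → ℝ) (hw : ContDiff ℝ 1 w) (hwper : Function.Periodic w 1)
    (Lop : ℝ → ℝ → (lp (fun _ : ℤ => ℂ) 2 →L[ℂ] lp (fun _ : ℤ => ℂ) 2))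
    (hLop : ∀ (α θ : ℝ) (u : lp (fun _ : ℤ => ℂ) 2) (n : ℤ),
      (Lop α θ u : ∀ _ : ℤ, ℂ) n
        = (∑ k ∈ Finset.Icc (-(d : ℤ)) (d : ℤ), vhat k * (u : ∀ _ : ℤ, ℂ) (n - k))
          + (w (θ + (n : ℝ) * α) : ℂ) * (u : ∀ _ : ℤ, ℂ) n) :
    ∀ (α α' θ : ℝ) (j : ℤ) (L : ℕ), 1 ≤ L →
      ∀ ψ : lp (fun _ : ℤ => ℂ) 2,
        (∀ n : ℤ, (L : ℤ) < |n - j| → (ψ : ∀ _ : ℤ, ℂ) n = 0) →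
        ‖Lop α' (θ + (j : ℝ) * (α - α')) ψ - Lop α θ ψ‖
          ≤ (⨆ x : ℝ, |deriv w x|) * (L : ℝ) * |α - α'| * ‖ψ‖ :=
  frequency_comparison_on_localized_general d vhat w hw hwper Lop hLop
end

section
/- Let 𝒥₂ = (0, 1; −1, 0). For every ε ∈ (0, 1/6) and every J ∈ M₂(ℂ) with J* = −J and ‖J − 𝒥₂‖ < ε (spectral norm), there exists A ∈ M₂(ℂ) with ‖A − I₂‖ ≤ ε (in particular A is invertible), 𝒥₂A = A*𝒥₂, and A*JA = 𝒥₂. -/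
open scoped Matrix

/-- The spectral (operator) norm of a rectangular complex matrix. -/
noncomputable def specNorm {m n : ℕ} (M : Matrix (Fin m) (Fin n) ℂ) : ℝ :=
  ‖LinearMap.toContinuousLinearMap (Matrix.toEuclideanLin M)‖

/-!
Write `J = 𝒥₂ K` with `K = 𝒥₂ᴴ J`. As a product of two skew-Hermitian matrices, `K` has real
trace `τ` and real determinant `δ`, and `𝒥₂ K = Kᴴ 𝒥₂`; the same then holds for every real linear
combination of `1` and `K`. Take for `A` the inverse square root of `K` given by the
two-dimensional formula `A = ((√δ + τ) • 1 - K) / √(δ (τ + 2√δ))`. It commutes with `K` and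
`A K A = 1`, so `Aᴴ J A = Aᴴ 𝒥₂ K A = 𝒥₂ A K A = 𝒥₂`. Since `|τ - 2| ≤ 2 ‖K - 1‖` and
`|det (K - 1)| ≤ ‖K - 1‖²`, the bound `‖A - 1‖ ≤ ‖K - 1‖ = ‖J - 𝒥₂‖` reduces to an inequality
between real numbers.
-/

open scoped Matrix.Norms.L2Operator

theorem specNorm_eq_l2_opNorm {m n : ℕ} (M : Matrix (Fin m) (Fin n) ℂ) : specNorm M = ‖M‖ :=
  rfl

namespace Matrix

theorem sum_norm_sq_le_l2_opNorm_sq {m n : Type*} [Fintype m] [Fintype n] [DecidableEq n]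
    (M : Matrix m n ℂ) (j : n) : ∑ i, ‖M i j‖ ^ 2 ≤ ‖M‖ ^ 2 := by
  have h := M.l2_opNorm_mulVec (PiLp.single 2 j 1)
  rw [PiLp.norm_single, norm_one, mul_one] at h
  have h_sq := pow_le_pow_left₀ (norm_nonneg _) h 2
  rw [EuclideanSpace.norm_sq_eq] at h_sq
  simpa [mulVec_single_one] using h_sq

theorem norm_entry_le_l2_opNorm {m n : Type*} [Fintype m] [Fintype n] [DecidableEq n]
    (M : Matrix m n ℂ) (i : m) (j : n) : ‖M i j‖ ≤ ‖M‖ := by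
  refine (pow_le_pow_iff_left₀ (norm_nonneg _) (norm_nonneg _) two_ne_zero).1 ?_
  exact (Finset.single_le_sum (fun k _ ↦ by positivity) (Finset.mem_univ i)).trans
    (M.sum_norm_sq_le_l2_opNorm_sq j)

theorem norm_trace_fin_two_le (M : Matrix (Fin 2) (Fin 2) ℂ) : ‖M.trace‖ ≤ 2 * ‖M‖ := by
  rw [trace_fin_two, two_mul]
  exact (norm_add_le _ _).trans
    (add_le_add (M.norm_entry_le_l2_opNorm 0 0) (M.norm_entry_le_l2_opNorm 1 1))

/-- Cauchy–Schwarz on the two columns of `M`. -/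
theorem norm_det_fin_two_le (M : Matrix (Fin 2) (Fin 2) ℂ) : ‖M.det‖ ≤ ‖M‖ ^ 2 := by
  have h₀ := M.sum_norm_sq_le_l2_opNorm_sq 0
  have h₁ := M.sum_norm_sq_le_l2_opNorm_sq 1
  simp only [Fin.sum_univ_two] at h₀ h₁
  have hdet : ‖M.det‖ ≤ ‖M 0 0‖ * ‖M 1 1‖ + ‖M 0 1‖ * ‖M 1 0‖ := by
    rw [det_fin_two, ← norm_mul, ← norm_mul]
    exact norm_sub_le _ _
  have hcs : (‖M 0 0‖ * ‖M 1 1‖ + ‖M 0 1‖ * ‖M 1 0‖) ^ 2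
      ≤ (‖M 0 0‖ ^ 2 + ‖M 1 0‖ ^ 2) * (‖M 0 1‖ ^ 2 + ‖M 1 1‖ ^ 2) := by
    nlinarith [sq_nonneg (‖M 0 0‖ * ‖M 0 1‖ - ‖M 1 0‖ * ‖M 1 1‖)]
  have hcols := mul_le_mul h₀ h₁ (by positivity) (by positivity)
  refine hdet.trans (abs_le_of_sq_le_sq' ?_ (by positivity)).2
  nlinarith

theorem det_sub_one_fin_two {R : Type*} [CommRing R] (K : Matrix (Fin 2) (Fin 2) R) :
    (K - 1).det = K.det - K.trace + 1 := by
  simp [det_fin_two, trace_fin_two]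
  ring

theorem smul_one_sub_sq_mul_fin_two {R : Type*} [CommRing R] (K : Matrix (Fin 2) (Fin 2) R)
    {σ : R} (hσ : σ ^ 2 = K.det) :
    ((σ + K.trace) • 1 - K) ^ 2 * K = (σ ^ 2 * (K.trace + 2 * σ)) • 1 := by
  rw [det_fin_two] at hσ
  ext i j
  fin_cases i <;> fin_cases j <;> simp [sq, mul_apply, Fin.sum_univ_two, trace_fin_two, one_apply]
  · linear_combination (-K 1 1 - 2 * σ) * hσ
  · linear_combination K 0 1 * hσ
  · linear_combination K 1 0 * hσ
  · linear_combination (-K 0 0 - 2 * σ) * hσ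

/-- With `σ = √(det K)` and `p = σ √(tr K + 2σ)`, this is the formula
`√M = (M + √(det M) • 1) / √(tr M + 2 √(det M))` for `M = K⁻¹`, written via
`adj K = tr K • 1 - K`. -/
theorem inv_sqrt_fin_two {R : Type*} [Field R] (K : Matrix (Fin 2) (Fin 2) R) {σ p : R}
    (hσ : σ ^ 2 = K.det) (hp : p ^ 2 = σ ^ 2 * (K.trace + 2 * σ)) (hp₀ : p ≠ 0) :
    (p⁻¹ • ((σ + K.trace) • 1 - K)) * K * (p⁻¹ • ((σ + K.trace) • 1 - K)) = 1 := by
  set B := (σ + K.trace) • (1 : Matrix (Fin 2) (Fin 2) R) - K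
  have hBK : B * K = K * B := by simp [B, sub_mul, mul_sub]
  calc (p⁻¹ • B) * K * (p⁻¹ • B) = (p⁻¹ ^ 2) • (B ^ 2 * K) := by
        simp only [smul_mul_assoc, mul_smul_comm, smul_smul, sq]
        rw [Matrix.mul_assoc, Matrix.mul_assoc, hBK]
    _ = 1 := by
        rw [smul_one_sub_sq_mul_fin_two K hσ, smul_smul, ← hp, inv_pow,
          inv_mul_cancel₀ (pow_ne_zero 2 hp₀), one_smul]

theorem star_trace_mul_of_skewHermitian {n R : Type*} [Fintype n] [CommRing R] [StarRing R]
    {M N : Matrix n n R} (hM : Mᴴ = -M) (hN : Nᴴ = -N) : star (M * N).trace = (M * N).trace := by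
  rw [← trace_conjTranspose, conjTranspose_mul, hM, hN, neg_mul_neg, trace_mul_comm]

theorem star_det_mul_of_skewHermitian {n R : Type*} [Fintype n] [DecidableEq n] [CommRing R]
    [StarRing R] {M N : Matrix n n R} (hM : Mᴴ = -M) (hN : Nᴴ = -N) :
    star (M * N).det = (M * N).det := by
  rw [← det_conjTranspose, conjTranspose_mul, hM, hN, neg_mul_neg, det_mul_comm]

theorem mul_ofReal_smul_one_add_smul {n : Type*} [Fintype n] [DecidableEq n]
    {P K : Matrix n n ℂ} (hK : P * K = Kᴴ * P) (a b : ℝ) :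
    P * ((a : ℂ) • 1 + (b : ℂ) • K) = ((a : ℂ) • 1 + (b : ℂ) • K)ᴴ * P := by
  simp [conjTranspose_add, conjTranspose_smul, Matrix.mul_add, Matrix.add_mul, hK]

end Matrix

/-- Both `σ + τ - 1` and `p` are close to `2`, and their difference is quadratic in the
perturbation: `(σ + τ - 1 - p) (σ + τ - 1 + p) = v (v - σ² - 2σ)` with `v = δ - τ + 1`, which is
`det (K - 1)` in the application. -/
theorem scalar_estimate {t τ δ σ p : ℝ} (ht : t ≤ 1 / 6) (hτ : |τ - 2| ≤ 2 * t)
    (hδ : |δ - τ + 1| ≤ t ^ 2) (hσ₀ : 0 < σ) (hσ : σ ^ 2 = δ) (hp₀ : 0 < p)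
    (hp : p ^ 2 = δ * (τ + 2 * σ)) : |σ + τ - 1 - p| + t ≤ t * p := by
  rw [abs_le] at hτ hδ
  have ht₀ : 0 ≤ t := by linarith
  have hσ_lo : 3 / 4 ≤ σ := by nlinarith
  have hσ_hi : σ ≤ 7 / 6 := by nlinarith
  have hp_lo : 4 / 3 ≤ p := by nlinarith
  set v := δ - τ + 1
  have hfactor : (σ + τ - 1 - p) * (σ + τ - 1 + p) = v * (v - σ ^ 2 - 2 * σ) := by
    linear_combination (-1 : ℝ) * hp + (2 - τ + δ) * hσ
  have hsum : 2 ≤ σ + τ - 1 + p := by linarith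
  have hbound : |σ + τ - 1 - p| * (σ + τ - 1 + p) ≤ t ^ 2 * (σ ^ 2 + 2 * σ + t ^ 2) := by
    rw [← abs_of_pos (by linarith : 0 < σ + τ - 1 + p), ← abs_mul, hfactor, abs_mul]
    have hv : |v| ≤ t ^ 2 := abs_le.2 hδ
    have hw : |v - σ ^ 2 - 2 * σ| ≤ σ ^ 2 + 2 * σ + t ^ 2 := by
      rw [abs_le]; constructor <;> nlinarith
    exact mul_le_mul hv hw (abs_nonneg _) (by positivity)
  have hsmall : t ^ 2 * (σ ^ 2 + 2 * σ + t ^ 2) ≤ t * (p - 1) * (σ + τ - 1 + p) := by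
    have hM : t * (σ ^ 2 + 2 * σ + t ^ 2) ≤ 2 / 3 := by nlinarith
    have hS : 2 / 3 ≤ (p - 1) * (σ + τ - 1 + p) := by nlinarith
    nlinarith
  have := le_of_mul_le_mul_right (hbound.trans hsmall) (by linarith)
  linarith

open Matrix

theorem norm_inv_smul_sub_sub_one_le {n : Type*} [Fintype n] [DecidableEq n] [Nonempty n]
    (K : Matrix n n ℂ) {μ p : ℝ} (hp₀ : 0 < p) :
    ‖(p : ℂ)⁻¹ • ((μ : ℂ) • 1 - K) - 1‖ ≤ (|μ - 1 - p| + ‖K - 1‖) / p := by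
  calc _ = ‖(((μ - 1 - p) / p : ℝ) : ℂ) • (1 : Matrix n n ℂ) - ((p⁻¹ : ℝ) : ℂ) • (K - 1)‖ := by
        have hcoef : (((μ - 1 - p) / p : ℝ) : ℂ) = (p : ℂ)⁻¹ * μ - (p : ℂ)⁻¹ - 1 := by
          have hp : (p : ℂ) ≠ 0 := by exact_mod_cast hp₀.ne'
          push_cast
          field_simp
        rw [hcoef]
        congr 1
        module
    _ ≤ |(μ - 1 - p) / p| + p⁻¹ * ‖K - 1‖ := by
        refine (norm_sub_le _ _).trans (add_le_add ?_ ?_)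
        · rw [norm_smul, CStarRing.norm_one, mul_one, Complex.norm_real, Real.norm_eq_abs]
        · rw [norm_smul, Complex.norm_real, Real.norm_of_nonneg (inv_nonneg.2 hp₀.le)]
    _ = (|μ - 1 - p| + ‖K - 1‖) / p := by
        rw [abs_div, abs_of_pos hp₀]
        ring

theorem exists_inv_sqrt_near_one (K : Matrix (Fin 2) (Fin 2) ℂ) {τ δ t : ℝ} (hτ : K.trace = τ)
    (hδ : K.det = δ) (hK : ‖K - 1‖ ≤ t) (ht : t ≤ 1 / 6) :
    ∃ A, (∃ a b : ℝ, A = (a : ℂ) • 1 + (b : ℂ) • K) ∧ A * K * A = 1 ∧ ‖A - 1‖ ≤ t := by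
  have hτ₂ : |τ - 2| ≤ 2 * t := by
    have h := (K - 1).norm_trace_fin_two_le
    rw [trace_sub, trace_one, hτ, Fintype.card_fin, Nat.cast_ofNat] at h
    rw [← Real.norm_eq_abs, ← Complex.norm_real]
    push_cast
    linarith
  have hδτ : |δ - τ + 1| ≤ t ^ 2 := by
    have h := (K - 1).norm_det_fin_two_le
    rw [det_sub_one_fin_two, hτ, hδ] at h
    rw [← Real.norm_eq_abs, ← Complex.norm_real]
    push_cast
    exact h.trans (pow_le_pow_left₀ (norm_nonneg _) hK 2)
  have hδ₀ : 0 < δ := by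
    rw [abs_le] at hτ₂ hδτ
    nlinarith
  set σ := √δ
  have hσ₀ : 0 < σ := Real.sqrt_pos.2 hδ₀
  have hσ : σ ^ 2 = δ := Real.sq_sqrt hδ₀.le
  have hq : 0 < δ * (τ + 2 * σ) := by
    have : 0 < τ := by linarith [(abs_le.1 hτ₂).1]
    positivity
  set p := √(δ * (τ + 2 * σ))
  have hp₀ : 0 < p := Real.sqrt_pos.2 hq
  have hp : p ^ 2 = δ * (τ + 2 * σ) := Real.sq_sqrt hq.le
  have hest := scalar_estimate ht hτ₂ hδτ hσ₀ hσ hp₀ hp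
  refine ⟨(p : ℂ)⁻¹ • (((σ + τ : ℝ) : ℂ) • 1 - K), ⟨(σ + τ) / p, -1 / p, ?_⟩, ?_, ?_⟩
  · push_cast
    module
  · have hAKA := inv_sqrt_fin_two K (σ := σ) (p := p) (by rw [hδ]; exact_mod_cast hσ)
      (by rw [hτ]; exact_mod_cast hσ ▸ hp) (by exact_mod_cast hp₀.ne')
    rwa [hτ, ← Complex.ofReal_add] at hAKA
  · calc _ ≤ (|σ + τ - 1 - p| + ‖K - 1‖) / p := norm_inv_smul_sub_sub_one_le K hp₀
      _ ≤ (|σ + τ - 1 - p| + t) / p := by gcongr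
      _ ≤ t := (div_le_iff₀ hp₀).2 hest

local notation "𝒥₂" => !![(0 : ℂ), 1; -1, 0]

theorem conjTranspose_J₂ : (𝒥₂)ᴴ = -𝒥₂ := by
  ext i j; fin_cases i <;> fin_cases j <;> simp

theorem J₂_mul_conjTranspose : 𝒥₂ * (𝒥₂)ᴴ = 1 := by
  ext i j; fin_cases i <;> fin_cases j <;> simp [mul_apply, Fin.sum_univ_two]

theorem conjTranspose_J₂_mul : (𝒥₂)ᴴ * 𝒥₂ = 1 := by
  ext i j; fin_cases i <;> fin_cases j <;> simp [mul_apply, Fin.sum_univ_two]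

theorem J₂_mul_self : 𝒥₂ * 𝒥₂ = -1 := by
  ext i j; fin_cases i <;> fin_cases j <;> simp [mul_apply, Fin.sum_univ_two]

theorem norm_conjTranspose_J₂_mul (X : Matrix (Fin 2) (Fin 2) ℂ) : ‖(𝒥₂)ᴴ * X‖ = ‖X‖ :=
  CStarRing.norm_coe_unitary_mul ⟨(𝒥₂)ᴴ, by
    rw [Unitary.mem_iff, star_eq_conjTranspose, conjTranspose_conjTranspose]
    exact ⟨J₂_mul_conjTranspose, conjTranspose_J₂_mul⟩⟩ X

/-- Quantitative symplectic correction for `2×2` Krein matrices: every skew-Hermitian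
`J` with `‖J - 𝒥₂‖ < ε < 1/6` admits `A` with `‖A - I₂‖ ≤ ε` (in particular invertible),
`𝒥₂A = A*𝒥₂`, and `A*JA = 𝒥₂`. -/
theorem symplectic_correction_two_by_two :
    ∀ ε : ℝ, 0 < ε → ε < 1 / 6 →
    ∀ J : Matrix (Fin 2) (Fin 2) ℂ,
      Jᴴ = -J →
      specNorm (J - !![(0 : ℂ), 1; -1, 0]) < ε →
      ∃ A : Matrix (Fin 2) (Fin 2) ℂ,
        specNorm (A - 1) ≤ ε ∧
        IsUnit A ∧
        !![(0 : ℂ), 1; -1, 0] * A = Aᴴ * !![(0 : ℂ), 1; -1, 0] ∧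
        Aᴴ * J * A = !![(0 : ℂ), 1; -1, 0] := by
  intro ε _ hε J hJ hJε
  simp only [specNorm_eq_l2_opNorm] at hJε ⊢
  set K := (𝒥₂)ᴴ * J with hK_def
  have hJK : J = 𝒥₂ * K := by rw [← Matrix.mul_assoc, J₂_mul_conjTranspose, Matrix.one_mul]
  have hK_J₂ : 𝒥₂ * K = Kᴴ * 𝒥₂ := by
    rw [← hJK, hK_def, conjTranspose_mul, conjTranspose_conjTranspose, hJ, Matrix.mul_assoc,
      J₂_mul_self, Matrix.mul_neg, Matrix.mul_one, neg_neg]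
  have hJ₂_skew : ((𝒥₂)ᴴ)ᴴ = -(𝒥₂)ᴴ := by
    rw [conjTranspose_conjTranspose, conjTranspose_J₂, neg_neg]
  obtain ⟨τ, hτ⟩ := Complex.conj_eq_iff_real.1 (star_trace_mul_of_skewHermitian hJ₂_skew hJ)
  obtain ⟨δ, hδ⟩ := Complex.conj_eq_iff_real.1 (star_det_mul_of_skewHermitian hJ₂_skew hJ)
  have hK : ‖K - 1‖ ≤ ε := by
    rw [← conjTranspose_J₂_mul, ← Matrix.mul_sub, norm_conjTranspose_J₂_mul]
    exact hJε.le
  obtain ⟨A, ⟨a, b, rfl⟩, hAKA, hA⟩ := exists_inv_sqrt_near_one K hτ hδ hK hε.le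
  refine ⟨_, hA, IsUnit.of_mul_eq_one _ ((Matrix.mul_assoc _ _ _).symm.trans hAKA),
    mul_ofReal_smul_one_add_smul hK_J₂ a b, ?_⟩
  rw [hJK, ← Matrix.mul_assoc, ← mul_ofReal_smul_one_add_smul hK_J₂, Matrix.mul_assoc,
    Matrix.mul_assoc, ← Matrix.mul_assoc _ K, hAKA, Matrix.mul_one]
end

section
/- For every real E, every x ∈ ℝ, and every α ∈ ℝ, one has L^{E,d}(x)* S_d L^{E,d}(x) = S_d and A^{E,d}(x)* S_d A^{E,d}(x) = S_d. -/
open scoped BigOperators Matrix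

/-- The horizontal strip `S_h = {z : |Im z| < h}`. -/
def strip (h : ℝ) : Set ℂ := {z : ℂ | |z.im| < h}

/-- Identification `Fin d ⊕ Fin d ≃ Fin (2d)`. -/
def sumEquiv (d : ℕ) : Fin d ⊕ Fin d ≃ Fin (2 * d) :=
  finSumFinEquiv.trans (finCongr (by omega))

/-- The upper-triangular matrix `C_d` with `(C_d)_{ij} = v̂_{d-(j-i)}` for `j ≥ i`. -/
noncomputable def Cdmat (d : ℕ) (vhat : ℤ → ℂ) : Matrix (Fin d) (Fin d) ℂ :=
  Matrix.of fun i j => if (i : ℕ) ≤ (j : ℕ) then vhat ((d : ℤ) - ((j : ℤ) - (i : ℤ))) else 0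

/-- The structure matrix `S_d = (0, -C_d*; C_d, 0)`. -/
noncomputable def Smat (d : ℕ) (vhat : ℤ → ℂ) : Matrix (Fin (2 * d)) (Fin (2 * d)) ℂ :=
  Matrix.reindex (sumEquiv d) (sumEquiv d)
    (Matrix.fromBlocks 0 (-(Cdmat d vhat)ᴴ) (Cdmat d vhat) 0)

/-- The standard symplectic matrix `𝒥_{2d} = (0, I_d; -I_d, 0)`. -/
noncomputable def Jmat (d : ℕ) : Matrix (Fin (2 * d)) (Fin (2 * d)) ℂ :=
  Matrix.reindex (sumEquiv d) (sumEquiv d) (Matrix.fromBlocks 0 1 (-1) 0)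

/-- The long-range transfer matrix `L^{E,d}(z)`. -/
noncomputable def Lmat (d : ℕ) (vhat : ℤ → ℂ) (E : ℂ) (z : ℂ) :
    Matrix (Fin (2 * d)) (Fin (2 * d)) ℂ :=
  Matrix.of fun r c =>
    if (r : ℕ) = 0 then
      (vhat d)⁻¹ *
        ((if (c : ℕ) = d - 1 then E - 2 * Complex.cos (2 * Real.pi * z) else 0)
          - vhat ((d : ℤ) - 1 - (c : ℤ)))
    else if (c : ℕ) + 1 = (r : ℕ) then 1 else 0

/-- The dual potential matrix `V_d(x)`. -/
noncomputable def Vdmat (d : ℕ) (vhat : ℤ → ℂ) (α x : ℝ) : Matrix (Fin d) (Fin d) ℂ :=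
  Matrix.of fun i j =>
    if i = j then 2 * Complex.cos (2 * Real.pi * ((x : ℂ) + (i : ℕ) * (α : ℂ)))
    else vhat ((i : ℤ) - (j : ℤ))

/-- The dual cocycle matrix `A^{E,d}(x) = (C_d⁻¹(E - V_d(x)), -C_d⁻¹C_d*; I, 0)`. -/
noncomputable def Amat (d : ℕ) (vhat : ℤ → ℂ) (α x : ℝ) (E : ℂ) :
    Matrix (Fin (2 * d)) (Fin (2 * d)) ℂ :=
  Matrix.reindex (sumEquiv d) (sumEquiv d)
    (Matrix.fromBlocks
      ((Cdmat d vhat)⁻¹ * (E • (1 : Matrix (Fin d) (Fin d) ℂ) - Vdmat d vhat α x))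
      (-((Cdmat d vhat)⁻¹ * (Cdmat d vhat)ᴴ))
      1 0)

/-! For the dual cocycle, write `A = (B, -C⁻¹Cᴴ; 1, 0)` with `B = C⁻¹(E - V)`: a block
computation reduces `Aᴴ S A = S` to `(C B)ᴴ = C B`, which holds since `V_d(x)` is Hermitian and
`E` is real.

The transfer matrix `L` is a shift plus a first row `ℓ`. With `v̂_{-k} = conj v̂_k`, the entries of
`S` are `s(p,q) = ±v̂_{p-q}` on two bands, and shifting both indices changes `s` only across the
block boundary: `s(p,q) - s(p+1,q+1) = [q = d-1] v̂_{p-q} - [p = d-1] v̂_{p-q}`. Expanding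
`Lᴴ S L` leaves `s(p+1,q+1)` plus terms in `v̂_d ℓ`, and `v̂_d ℓ` is exactly the row that
supplies these boundary terms (the real potential term cancels against its conjugate). -/

open Matrix

namespace Matrix

theorem conjTranspose_reindex_mul_mul {n m R : Type*} [Fintype n] [DecidableEq n] [Fintype m]
    [DecidableEq m] [CommSemiring R] [StarRing R] (e : n ≃ m) (A S : Matrix n n R) :
    (reindex e e A)ᴴ * reindex e e S * reindex e e A = reindex e e (Aᴴ * S * A) := by
  rw [conjTranspose_reindex, ← coe_reindexAlgEquiv R R, map_mul, map_mul]

theorem fromBlocks_conjTranspose_mul_mul_self_of_isHermitian_mul {n R : Type*} [Fintype n]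
    [DecidableEq n] [CommRing R] [StarRing R] {C B : Matrix n n R} (hC : IsUnit C.det)
    (hCB : (C * B).IsHermitian) :
    (fromBlocks B (-(C⁻¹ * Cᴴ)) 1 0)ᴴ * fromBlocks 0 (-Cᴴ) C 0 * fromBlocks B (-(C⁻¹ * Cᴴ)) 1 0
      = fromBlocks 0 (-Cᴴ) C 0 := by
  have hCinv : C * C⁻¹ = 1 := mul_nonsing_inv C hC
  have hBC : Bᴴ * Cᴴ = C * B := by rw [← conjTranspose_mul]; exact hCB
  simp only [fromBlocks_conjTranspose, fromBlocks_multiply, conjTranspose_neg, conjTranspose_mul,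
    conjTranspose_conjTranspose, conjTranspose_one, conjTranspose_zero, Matrix.mul_zero,
    Matrix.zero_mul, Matrix.one_mul, Matrix.mul_one, zero_add, add_zero, Matrix.mul_neg,
    Matrix.neg_mul, neg_neg, hBC, ← Matrix.mul_assoc, hCinv]
  rw [Matrix.mul_assoc, ← conjTranspose_mul, hCinv]
  simp

end Matrix

theorem Fin.sum_ite_val_eq {M : Type*} [AddCommMonoid M] {n k : ℕ} (g : ℕ → M) (hg : g n = 0)
    (hk : k ≤ n) : ∑ c : Fin n, (if (c : ℕ) = k then g c else 0) = g k := by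
  rw [Fin.sum_univ_eq_sum_range (fun c => if c = k then g c else 0), Finset.sum_ite_eq']
  split_ifs with h
  · rfl
  · rw [show k = n by simp at h; omega, hg]

section ShiftCompanion

variable {R : Type*} [Semiring R]

def shiftCompanion (n : ℕ) (ℓ : ℕ → R) : Matrix (Fin n) (Fin n) R :=
  of fun r c => if (r : ℕ) = 0 then ℓ c else if (c : ℕ) + 1 = r then 1 else 0

theorem shiftCompanion_apply {n : ℕ} (ℓ : ℕ → R) (r c : Fin n) :
    shiftCompanion n ℓ r c
      = (if (r : ℕ) = 0 then ℓ c else 0) + (if (r : ℕ) = c + 1 then 1 else 0) := by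
  simp only [shiftCompanion, of_apply]
  split_ifs <;> first | omega | simp

theorem sum_mul_shiftCompanion {n : ℕ} (ℓ f : ℕ → R) (hf : f n = 0) (q : Fin n) :
    ∑ c : Fin n, f c * shiftCompanion n ℓ c q = f 0 * ℓ q + f (q + 1) := by
  simp only [shiftCompanion_apply, mul_add, Finset.sum_add_distrib, mul_ite, mul_zero, mul_one]
  rw [Fin.sum_ite_val_eq (fun c => f c * ℓ q) (by simp [hf]) (Nat.zero_le n),
    Fin.sum_ite_val_eq f hf q.isLt]

variable [StarRing R]

theorem sum_star_shiftCompanion_mul {n : ℕ} (ℓ g : ℕ → R) (hg : g n = 0) (p : Fin n) :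
    ∑ r : Fin n, star (shiftCompanion n ℓ r p) * g r = star (ℓ p) * g 0 + g (p + 1) := by
  simp only [shiftCompanion_apply, star_add, apply_ite star, star_zero, star_one, add_mul,
    Finset.sum_add_distrib, ite_mul, zero_mul, one_mul]
  rw [Fin.sum_ite_val_eq (fun r => star (ℓ p) * g r) (by simp [hg]) (Nat.zero_le n),
    Fin.sum_ite_val_eq g hg p.isLt]

theorem shiftCompanion_conjTranspose_mul_mul_apply {n : ℕ} (ℓ : ℕ → R) (S : ℕ → ℕ → R)
    (hSrow : ∀ j, S n j = 0) (hScol : ∀ i, S i n = 0) (p q : Fin n) :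
    ((shiftCompanion n ℓ)ᴴ * of (fun i j : Fin n => S i j) * shiftCompanion n ℓ) p q
      = star (ℓ p) * S 0 0 * ℓ q + star (ℓ p) * S 0 (q + 1) + S (p + 1) 0 * ℓ q
        + S (p + 1) (q + 1) := by
  simp only [mul_apply, conjTranspose_apply, of_apply]
  rw [sum_mul_shiftCompanion ℓ (fun c => ∑ r : Fin n, star (shiftCompanion n ℓ r p) * S r c)
    (by simp [hScol]), sum_star_shiftCompanion_mul ℓ (fun r => S r 0) (hSrow 0),
    sum_star_shiftCompanion_mul ℓ (fun r => S r (q + 1)) (hSrow _)]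
  simp only [add_mul, mul_assoc]
  abel

end ShiftCompanion

section SymplecticEntry

variable {R : Type*} [AddCommGroup R]

def symplecticEntry (d : ℕ) (v : ℤ → R) (p q : ℕ) : R :=
  if q < d ∧ d ≤ p ∧ p ≤ q + d then v (p - q)
  else if p < d ∧ d ≤ q ∧ q ≤ p + d then -v (p - q) else 0

theorem symplecticEntry_two_mul_left (d : ℕ) (v : ℤ → R) (q : ℕ) :
    symplecticEntry d v (2 * d) q = 0 := by
  simp only [symplecticEntry]
  split_ifs <;> first | omega | rfl

theorem symplecticEntry_two_mul_right (d : ℕ) (v : ℤ → R) (p : ℕ) :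
    symplecticEntry d v p (2 * d) = 0 := by
  simp only [symplecticEntry]
  split_ifs <;> first | omega | rfl

theorem symplecticEntry_zero_zero (d : ℕ) (v : ℤ → R) : symplecticEntry d v 0 0 = 0 := by
  simp only [symplecticEntry]
  split_ifs <;> first | omega | rfl

theorem symplecticEntry_zero_succ (d : ℕ) (v : ℤ → R) (q : ℕ) :
    symplecticEntry d v 0 (q + 1) = if q + 1 = d then -v (-d) else 0 := by
  simp only [symplecticEntry]
  split_ifs <;> first | omega | rfl | (congr 2; omega)

theorem symplecticEntry_succ_zero (d : ℕ) (v : ℤ → R) (p : ℕ) :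
    symplecticEntry d v (p + 1) 0 = if p + 1 = d then v d else 0 := by
  simp only [symplecticEntry]
  split_ifs <;> first | omega | rfl | (congr 1; omega)

theorem symplecticEntry_succ_succ {d p q : ℕ} (v : ℤ → R) (hp : p < 2 * d) (hq : q < 2 * d) :
    symplecticEntry d v p q = symplecticEntry d v (p + 1) (q + 1)
      + (if q + 1 = d then v (p - (d - 1)) else 0) - (if p + 1 = d then v (d - 1 - q) else 0) := by
  have hshift : ((p + 1 : ℕ) : ℤ) - ((q + 1 : ℕ) : ℤ) = p - q := by push_cast; ring
  rw [ite_congr rfl (fun _ : q + 1 = d => congrArg v (by omega : (p : ℤ) - (d - 1) = p - q))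
      fun _ => rfl,
    ite_congr rfl (fun _ : p + 1 = d => congrArg v (by omega : (d : ℤ) - 1 - q = p - q))
      fun _ => rfl]
  simp only [symplecticEntry, hshift]
  split_ifs <;> first | omega | abel

end SymplecticEntry

theorem sumEquiv_inl_val (d : ℕ) (i : Fin d) : (sumEquiv d (Sum.inl i) : ℕ) = i := rfl

theorem sumEquiv_inr_val (d : ℕ) (i : Fin d) : (sumEquiv d (Sum.inr i) : ℕ) = d + i := rfl

theorem Smat_eq_symplecticEntry (d : ℕ) (vhat : ℤ → ℂ)
    (hv : ∀ k : ℤ, vhat (-k) = starRingEnd ℂ (vhat k)) :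
    Smat d vhat = of fun i j : Fin (2 * d) => symplecticEntry d vhat i j := by
  ext p q
  obtain ⟨a, rfl⟩ := (sumEquiv d).surjective p
  obtain ⟨b, rfl⟩ := (sumEquiv d).surjective q
  rcases a with i | i <;> rcases b with j | j <;>
    simp only [Smat, reindex_apply, submatrix_apply, Equiv.symm_apply_apply, fromBlocks_apply₁₁,
      fromBlocks_apply₁₂, fromBlocks_apply₂₁, fromBlocks_apply₂₂, of_apply, sumEquiv_inl_val,
      sumEquiv_inr_val, Cdmat, Matrix.neg_apply, conjTranspose_apply, Matrix.zero_apply,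
      Complex.star_def, apply_ite (starRingEnd ℂ), map_zero, ← hv] <;>
    simp only [symplecticEntry] <;> have := i.isLt <;> have := j.isLt <;>
    split_ifs <;> first | omega | rfl | exact neg_zero | (congr 1; omega) | (congr 2; omega)

noncomputable def Lrow (d : ℕ) (vhat : ℤ → ℂ) (E z : ℂ) (c : ℕ) : ℂ :=
  (vhat d)⁻¹ * ((if c = d - 1 then E - 2 * Complex.cos (2 * Real.pi * z) else 0)
    - vhat ((d : ℤ) - 1 - (c : ℤ)))

theorem Lmat_eq_shiftCompanion (d : ℕ) (vhat : ℤ → ℂ) (E z : ℂ) :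
    Lmat d vhat E z = shiftCompanion (2 * d) (Lrow d vhat E z) := rfl

theorem mul_Lrow {d : ℕ} {vhat : ℤ → ℂ} (hvd : vhat d ≠ 0) (E z : ℂ) (c : ℕ) :
    vhat d * Lrow d vhat E z c
      = (if c = d - 1 then E - 2 * Complex.cos (2 * Real.pi * z) else 0)
        - vhat ((d : ℤ) - 1 - (c : ℤ)) := by
  rw [Lrow, ← mul_assoc, mul_inv_cancel₀ hvd, one_mul]

theorem star_Lrow_mul {d : ℕ} {vhat : ℤ → ℂ} (hv : ∀ k : ℤ, vhat (-k) = starRingEnd ℂ (vhat k))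
    (hvd : vhat d ≠ 0) (E x : ℝ) (c : ℕ) :
    star (Lrow d vhat E x c) * vhat (-d)
      = (if c = d - 1 then E - 2 * Complex.cos (2 * Real.pi * x) else 0)
        - vhat ((c : ℤ) - (d - 1)) := by
  rw [hv, ← Complex.star_def, ← star_mul, mul_Lrow hvd]
  simp only [star_sub, apply_ite star, star_zero, Complex.star_def, ← hv, map_mul, map_ofNat,
    Complex.conj_ofReal, ← Complex.cos_conj]
  congr 2
  ring

theorem Lmat_conjTranspose_mul_Smat_mul_self (d : ℕ) (vhat : ℤ → ℂ)
    (hv : ∀ k : ℤ, vhat (-k) = starRingEnd ℂ (vhat k)) (hvd : vhat (d : ℤ) ≠ 0) (E x : ℝ) :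
    (Lmat d vhat E x)ᴴ * Smat d vhat * Lmat d vhat E x = Smat d vhat := by
  rw [Smat_eq_symplecticEntry d vhat hv, Lmat_eq_shiftCompanion]
  ext p q
  rw [shiftCompanion_conjTranspose_mul_mul_apply _ _ (symplecticEntry_two_mul_left d vhat)
      (symplecticEntry_two_mul_right d vhat),
    of_apply, symplecticEntry_succ_succ vhat p.isLt q.isLt, symplecticEntry_zero_zero,
    symplecticEntry_zero_succ, symplecticEntry_succ_zero]
  have hp : (p : ℕ) = d - 1 ↔ (p : ℕ) + 1 = d := by omega
  have hq : (q : ℕ) = d - 1 ↔ (q : ℕ) + 1 = d := by omega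
  simp only [mul_zero, zero_mul, zero_add, mul_ite, ite_mul, mul_neg, star_Lrow_mul hv hvd,
    mul_Lrow hvd, hp, hq]
  split_ifs <;> ring

theorem Cdmat_isUpperTriangular (d : ℕ) (vhat : ℤ → ℂ) : (Cdmat d vhat).IsUpperTriangular :=
  fun _ _ hij => if_neg (not_le.mpr hij)

theorem det_Cdmat (d : ℕ) (vhat : ℤ → ℂ) : (Cdmat d vhat).det = vhat d ^ d := by
  rw [det_of_isUpperTriangular (Cdmat_isUpperTriangular d vhat)]
  simp [Cdmat]

theorem Vdmat_isHermitian (d : ℕ) (vhat : ℤ → ℂ)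
    (hv : ∀ k : ℤ, vhat (-k) = starRingEnd ℂ (vhat k)) (α x : ℝ) :
    (Vdmat d vhat α x).IsHermitian := by
  ext i j
  obtain rfl | hij := eq_or_ne i j
  · simp [Vdmat, ← Complex.cos_conj, map_ofNat]
  · simp [Vdmat, hij, hij.symm, ← hv]

theorem Amat_conjTranspose_mul_Smat_mul_self (d : ℕ) (vhat : ℤ → ℂ)
    (hv : ∀ k : ℤ, vhat (-k) = starRingEnd ℂ (vhat k)) (hvd : vhat (d : ℤ) ≠ 0) (E x α : ℝ) :
    (Amat d vhat α x E)ᴴ * Smat d vhat * Amat d vhat α x E = Smat d vhat := by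
  have hC : IsUnit (Cdmat d vhat).det := by
    rw [det_Cdmat]; exact (pow_ne_zero d hvd).isUnit
  have hCB :
      (Cdmat d vhat * ((Cdmat d vhat)⁻¹ * ((E : ℂ) • 1 - Vdmat d vhat α x))).IsHermitian := by
    rw [mul_nonsing_inv_cancel_left _ _ hC]
    exact (isHermitian_one.smul (Complex.conj_ofReal E)).sub (Vdmat_isHermitian d vhat hv α x)
  rw [Amat, Smat, conjTranspose_reindex_mul_mul,
    fromBlocks_conjTranspose_mul_mul_self_of_isHermitian_mul hC hCB]

theorem longrange_cocycle_symplectic_general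
    (d : ℕ)
    (vhat : ℤ → ℂ) (hv : ∀ k : ℤ, vhat (-k) = starRingEnd ℂ (vhat k))
    (hvd : vhat (d : ℤ) ≠ 0) :
    ∀ E x α : ℝ,
      (Lmat d vhat (E : ℂ) (x : ℂ))ᴴ * Smat d vhat * Lmat d vhat (E : ℂ) (x : ℂ)
        = Smat d vhat ∧
      (Amat d vhat α x (E : ℂ))ᴴ * Smat d vhat * Amat d vhat α x (E : ℂ)
        = Smat d vhat := by
  intro E x α
  exact ⟨Lmat_conjTranspose_mul_Smat_mul_self d vhat hv hvd E x,
    Amat_conjTranspose_mul_Smat_mul_self d vhat hv hvd E x α⟩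

/-- Symplecticity of the long-range cocycle: `L^{E,d}(x)* S_d L^{E,d}(x) = S_d` and
`A^{E,d}(x)* S_d A^{E,d}(x) = S_d` for all real `E, x, α`. -/
theorem longrange_cocycle_symplectic
    (d : ℕ) (hd : 1 ≤ d)
    (vhat : ℤ → ℂ) (hv : ∀ k : ℤ, vhat (-k) = starRingEnd ℂ (vhat k))
    (hvd : vhat (d : ℤ) ≠ 0) :
    ∀ E x α : ℝ,
      (Lmat d vhat (E : ℂ) (x : ℂ))ᴴ * Smat d vhat * Lmat d vhat (E : ℂ) (x : ℂ)
        = Smat d vhat ∧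
      (Amat d vhat α x (E : ℂ))ᴴ * Smat d vhat * Amat d vhat α x (E : ℂ)
        = Smat d vhat :=
  longrange_cocycle_symplectic_general d vhat hv hvd
end

section
/- Let ∂L denote the 2d×2d matrix (1/v̂_d)·E_{1,d} (the derivative of L^{E,d}(x) with respect to E) and ∂A the 2d×2d block matrix (C_d^{-1}, 0; 0, 0) (the derivative of A^{E,d}(x) with respect to E). Then for all real E, x, α: L^{E,d}(x)* S_d ∂L = E_{d,d} and A^{E,d}(x)* S_d ∂A = (I_d, 0; 0, 0). Consequently, for every unit vector v = (v₁,…,v_{2d}) ∈ ℂ^{2d}: v* L^{E,d}(x)* S_d ∂L v = |v_d|² ∈ [0,1] and v* A^{E,d}(x)* S_d ∂A v = Σ_{i=1}^{d} |v_i|² ∈ [0,1]. -/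
open scoped BigOperators Matrix

/-!
Both identities are sparse-matrix computations. Only the first row of `L` depends on `E`, and
the first column of `S_d` is `v̂_d e_{d+1}` (the first column of `C_d` is `v̂_d e_1`), so
`S_d ∂L = E_{d+1,d}`; row `d+1` of `L` is `e_d`, so `L* E_{d+1,d} = E_{d,d}`. For `A`, block
multiplication gives `S_d ∂A = (0, 0; C_d C_d⁻¹, 0) = (0, 0; I, 0)`, and the block `I` of `A`
becomes the upper right block of `A*`. The quadratic forms of the two resulting coordinate
projections are partial sums of `|v_i|²`, hence lie in `[0, 1]` for a unit vector.
-/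

namespace Matrix

variable {l m n ι α 𝕜 : Type*}

theorem mul_single_eq_single_of_col [Fintype m] [DecidableEq l] [DecidableEq m] [DecidableEq n]
    [NonUnitalNonAssocSemiring α] {S : Matrix l m α} {a : m} {k : l} {s : α}
    (hS : S.col a = Pi.single k s) (b : n) (c : α) :
    S * single a b c = single k b (s * c) := by
  ext r j
  by_cases hj : j = b
  · subst hj
    rw [mul_single_apply_same, show S r a = S.col a r from rfl, hS]
    by_cases hr : r = k
    · simp [hr]
    · simp [hr, Ne.symm hr]
  · rw [mul_single_apply_of_ne _ _ _ _ _ hj, single_apply_of_col_ne _ _ (Ne.symm hj)]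

theorem fromBlocks_conjTranspose_mul_fromBlocks_mul_fromBlocks [Fintype n] [DecidableEq n]
    [Semiring α] [StarRing α] (X Y Z C B : Matrix n n α) (hCB : C * B = 1) :
    (fromBlocks X Y 1 0)ᴴ * fromBlocks 0 Z C 0 * fromBlocks B 0 0 0 =
      fromBlocks (1 : Matrix n n α) 0 0 0 := by
  simp [fromBlocks_conjTranspose, fromBlocks_multiply, hCB]

variable [RCLike 𝕜]

theorem star_dotProduct_single_one_mulVec [Fintype n] [DecidableEq n] (v : n → 𝕜) (k : n) :
    star v ⬝ᵥ single k k 1 *ᵥ v = ((‖v k‖ ^ 2 : ℝ) : 𝕜) := by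
  rw [single_mulVec_eq, dotProduct_smul, dotProduct_single_one, one_mul, smul_eq_mul,
    Pi.star_apply, RCLike.star_def, RCLike.mul_conj, RCLike.ofReal_pow]

theorem star_dotProduct_reindex_fromBlocks_one_mulVec [Fintype m] [Fintype n] [Fintype ι]
    [DecidableEq m] (e : m ⊕ n ≃ ι) (v : ι → 𝕜) :
    star v ⬝ᵥ reindex e e (fromBlocks 1 0 0 0) *ᵥ v =
      ((∑ i, ‖v (e (Sum.inl i))‖ ^ 2 : ℝ) : 𝕜) := by
  classical
  rw [← diagonal_one, ← diagonal_zero, fromBlocks_diagonal, reindex_apply,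
    submatrix_diagonal_equiv]
  simp only [dotProduct, mulVec_diagonal, ← e.sum_comp, Fintype.sum_sum_type]
  simp [RCLike.conj_mul]

end Matrix

theorem Fintype.sum_comp_inl_le_sum {m n ι : Type*} [Fintype m] [Fintype n] [Fintype ι]
    (e : m ⊕ n ≃ ι) {f : ι → ℝ} (hf : 0 ≤ f) : ∑ i, f (e (Sum.inl i)) ≤ ∑ j, f j := by
  rw [← e.sum_comp, Fintype.sum_sum_type]
  exact le_add_of_nonneg_right (Finset.sum_nonneg fun i _ => hf _)

section LongRange

open Matrix

variable (d : ℕ) (vhat : ℤ → ℂ)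

theorem sumEquiv_inl (i : Fin d) : sumEquiv d (Sum.inl i) = Fin.castLE (by omega) i := rfl

theorem Smat_sumEquiv_apply (x y : Fin d ⊕ Fin d) :
    Smat d vhat (sumEquiv d x) (sumEquiv d y) =
      fromBlocks 0 (-(Cdmat d vhat)ᴴ) (Cdmat d vhat) 0 x y := by
  simp [Smat]

theorem Cdmat_col_zero (hd : 0 < d) :
    (Cdmat d vhat).col ⟨0, hd⟩ = Pi.single ⟨0, hd⟩ (vhat d) := by
  ext i
  by_cases hi : i = ⟨0, hd⟩
  · subst hi; simp [Cdmat]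
  · have hi' : ¬(i : ℕ) ≤ 0 := fun h => hi (Fin.ext (Nat.le_zero.mp h))
    simp only [col_apply, Cdmat, of_apply, if_neg hi', Pi.single_apply, if_neg hi]

theorem Smat_col_zero (hd : 0 < d) :
    (Smat d vhat).col ⟨0, by omega⟩ = Pi.single ⟨d, by omega⟩ (vhat d) := by
  ext r
  obtain ⟨x, rfl⟩ := (sumEquiv d).surjective r
  rw [show (⟨0, _⟩ : Fin (2 * d)) = sumEquiv d (Sum.inl ⟨0, hd⟩) from rfl,
    show (⟨d, _⟩ : Fin (2 * d)) = sumEquiv d (Sum.inr ⟨0, hd⟩) from Fin.ext (by simp [sumEquiv]),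
    col_apply, Smat_sumEquiv_apply]
  rcases x with i | i
  · simp
  · simpa [Pi.single_apply] using congrFun (Cdmat_col_zero d vhat hd) i

theorem Lmat_conjTranspose_col (hd : 0 < d) (E z : ℂ) :
    (Lmat d vhat E z)ᴴ.col ⟨d, by omega⟩ = Pi.single ⟨d - 1, by omega⟩ 1 := by
  ext c
  simp only [col_apply, conjTranspose_apply, Lmat, of_apply, if_neg hd.ne', Pi.single_apply,
    Fin.ext_iff]
  split_ifs <;> first | (exfalso; omega) | simp

theorem Cdmat_det : (Cdmat d vhat).det = vhat d ^ d := by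
  rw [det_of_isUpperTriangular]
  · simp [Cdmat]
  · intro i j hij
    exact if_neg (not_le.mpr (show (j : ℕ) < i from hij))

theorem Cdmat_mul_inv (hvd : vhat d ≠ 0) : Cdmat d vhat * (Cdmat d vhat)⁻¹ = 1 :=
  mul_nonsing_inv _ (by rw [Cdmat_det]; exact (pow_ne_zero _ hvd).isUnit)

theorem Lmat_conjTranspose_mul_Smat_mul_single (hd : 0 < d) (hvd : vhat d ≠ 0) (E z : ℂ) :
    (Lmat d vhat E z)ᴴ * Smat d vhat *
        ((vhat d)⁻¹ • single (⟨0, by omega⟩ : Fin (2 * d)) ⟨d - 1, by omega⟩ 1) =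
      single (⟨d - 1, by omega⟩ : Fin (2 * d)) ⟨d - 1, by omega⟩ 1 := by
  rw [Matrix.mul_assoc, smul_single, smul_eq_mul, mul_one,
    mul_single_eq_single_of_col (Smat_col_zero d vhat hd), mul_inv_cancel₀ hvd,
    mul_single_eq_single_of_col (Lmat_conjTranspose_col d vhat hd E z), one_mul]

theorem Amat_conjTranspose_mul_Smat_mul (hvd : vhat d ≠ 0) (α x : ℝ) (E : ℂ) :
    (Amat d vhat α x E)ᴴ * Smat d vhat *
        reindex (sumEquiv d) (sumEquiv d) (fromBlocks (Cdmat d vhat)⁻¹ 0 0 0) =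
      reindex (sumEquiv d) (sumEquiv d) (fromBlocks (1 : Matrix (Fin d) (Fin d) ℂ) 0 0 0) := by
  simp only [Amat, Smat, reindex_apply, conjTranspose_submatrix, submatrix_mul_equiv]
  rw [fromBlocks_conjTranspose_mul_fromBlocks_mul_fromBlocks _ _ _ _ _ (Cdmat_mul_inv d vhat hvd)]

end LongRange

/-- Monotonicity structure of the energy derivative of the long-range cocycle:
`L* S_d ∂L = E_{d,d}` and `A* S_d ∂A = (I_d,0;0,0)`, and for unit vectors the
associated quadratic forms are `|v_d|²` resp. `Σ_{i=1}^d |v_i|²`, both in `[0,1]`. -/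
theorem longrange_cocycle_premonotone
    (d : ℕ) (hd : 1 ≤ d)
    (vhat : ℤ → ℂ)
    (hvd : vhat (d : ℤ) ≠ 0) :
    ∀ E x α : ℝ,
      (Lmat d vhat (E : ℂ) (x : ℂ))ᴴ * Smat d vhat *
          ((vhat (d : ℤ))⁻¹ • Matrix.single
            (⟨0, by omega⟩ : Fin (2 * d)) (⟨d - 1, by omega⟩ : Fin (2 * d)) (1 : ℂ))
        = Matrix.single
            (⟨d - 1, by omega⟩ : Fin (2 * d)) (⟨d - 1, by omega⟩ : Fin (2 * d)) (1 : ℂ) ∧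
      (Amat d vhat α x (E : ℂ))ᴴ * Smat d vhat *
          (Matrix.reindex (sumEquiv d) (sumEquiv d)
            (Matrix.fromBlocks ((Cdmat d vhat)⁻¹) 0 0 0))
        = Matrix.reindex (sumEquiv d) (sumEquiv d)
            (Matrix.fromBlocks (1 : Matrix (Fin d) (Fin d) ℂ) 0 0 0) ∧
      ∀ v : Fin (2 * d) → ℂ, (∑ i, ‖v i‖ ^ 2) = 1 →
        (star v ⬝ᵥ (((Lmat d vhat (E : ℂ) (x : ℂ))ᴴ * Smat d vhat *
            ((vhat (d : ℤ))⁻¹ • Matrix.single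
              (⟨0, by omega⟩ : Fin (2 * d)) (⟨d - 1, by omega⟩ : Fin (2 * d)) (1 : ℂ))).mulVec v)
          = ((‖v ⟨d - 1, by omega⟩‖ ^ 2 : ℝ) : ℂ)) ∧
        ‖v ⟨d - 1, by omega⟩‖ ^ 2 ≤ 1 ∧
        0 ≤ ‖v ⟨d - 1, by omega⟩‖ ^ 2 ∧
        (star v ⬝ᵥ (((Amat d vhat α x (E : ℂ))ᴴ * Smat d vhat *
            (Matrix.reindex (sumEquiv d) (sumEquiv d)
              (Matrix.fromBlocks ((Cdmat d vhat)⁻¹) 0 0 0))).mulVec v)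
          = (((∑ i : Fin d, ‖v (Fin.castLE (by omega) i)‖ ^ 2 : ℝ)) : ℂ)) ∧
        (∑ i : Fin d, ‖v (Fin.castLE (by omega) i)‖ ^ 2) ≤ 1 ∧
        0 ≤ ∑ i : Fin d, ‖v (Fin.castLE (by omega) i)‖ ^ 2 := by
  intro E x α
  have hL := Lmat_conjTranspose_mul_Smat_mul_single d vhat hd hvd E x
  have hA := Amat_conjTranspose_mul_Smat_mul d vhat hvd α x E
  refine ⟨hL, hA, fun v hv => ?_⟩
  have hnonneg : 0 ≤ fun i => ‖v i‖ ^ 2 := fun i => sq_nonneg _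
  have hA_form := Matrix.star_dotProduct_reindex_fromBlocks_one_mulVec (sumEquiv d) v
  have hA_le := Fintype.sum_comp_inl_le_sum (sumEquiv d) hnonneg
  simp only [sumEquiv_inl] at hA_form hA_le
  refine ⟨by rw [hL]; exact Matrix.star_dotProduct_single_one_mulVec v _, ?_, sq_nonneg _,
    by rw [hA]; exact hA_form, hv ▸ hA_le, Finset.sum_nonneg fun i _ => sq_nonneg _⟩
  exact hv ▸ Finset.single_le_sum (fun i _ => hnonneg i) (Finset.mem_univ _)
end

section
/- Let I ⊆ ℝ be an interval and let A : I × ℝ → M_{2d}(ℂ), (t,x) ↦ A^t(x), be 1-periodic in x, C¹ in t, with A^t(x) ∈ HSp(2d) for all (t,x), and monotonic: for every (t,x) ∈ I × ℝ and every nonzero isotropic v ∈ ℂ^{2d}, the number v* A^t(x)* 𝒥_{2d} ∂_tA^t(x) v is a positive real. Fix t ∈ I, α, x ∈ ℝ, a Lagrangian frame Λ ∈ ℂ^{2d×d}, and an integer k ≥ 1; set Λ₀ = Λ and Λ_j = A^t(x+(j−1)α)·Λ_{j−1} for 1 ≤ j ≤ k. Then the matrix ℳ = Σ_{j=1}^{k}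 Λ_{j−1}* (A^t(x+(j−1)α)* 𝒥_{2d} ∂_tA^t(x+(j−1)α)) Λ_{j−1} is Hermitian positive definite; moreover, writing Λ_k = (X; Y) in d×d blocks, the matrix X − iY is invertible and Ω = −2·((X−iY)^{-1})* ℳ (X−iY)^{-1} is negative definite, so in particular tr Ω < 0. -/
/-!
Hermitian-symplectic matrices preserve the symplectic form `𝒥`, so every iterate `Λ_j` is again
a Lagrangian frame with trivial kernel. Each summand of `ℳ` is the Krein form `A* 𝒥 ∂ₜA`
compressed to the isotropic subspace `Λ_j ℂ^d`, hence positive definite by monotonicity (a complex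
matrix whose quadratic form is positive is automatically Hermitian, by polarization).
For a Lagrangian frame `(X; Y)` one has `X* Y = Y* X`, so `(X - iY)* (X - iY) = X* X + Y* Y = Λ* Λ`
is positive definite. Thus `X - iY` is invertible, and `-Ω` is a positive multiple of a
congruence of `ℳ`.
-/

open scoped BigOperators Matrix ComplexOrder

/-- Entrywise `t`-derivative within the parameter interval `I` of a two-parameter
matrix family. -/
noncomputable def matDerivT {m n : ℕ} (I : Set ℝ)
    (A : ℝ → ℝ → Matrix (Fin m) (Fin n) ℂ) (t x : ℝ) : Matrix (Fin m) (Fin n) ℂ :=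
  Matrix.of fun i j => derivWithin (fun s => A s x i j) I t

open Matrix

namespace Matrix

open Complex

variable {m n : Type*}

open scoped InnerProductSpace in
lemma isHermitian_of_forall_im_star_dotProduct_mulVec_self [Fintype n] {M : Matrix n n ℂ}
    (h : ∀ x : n → ℂ, (star x ⬝ᵥ M *ᵥ x).im = 0) : M.IsHermitian := by
  classical
  rw [← isSymmetric_toEuclideanLin_iff, LinearMap.isSymmetric_iff_inner_map_self_real]
  intro v
  have hv : ⟪M.toEuclideanLin v, v⟫_ℂ = star (star v.ofLp ⬝ᵥ M *ᵥ v.ofLp) := by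
    rw [EuclideanSpace.inner_eq_star_dotProduct, star_dotProduct]
    simp [dotProduct_comm]
  rw [conj_eq_iff_im, hv, star_def, conj_im, h, neg_zero]

lemma posDef_of_forall_star_dotProduct_mulVec_pos [Fintype n] {M : Matrix n n ℂ}
    (h : ∀ x : n → ℂ, x ≠ 0 → 0 < star x ⬝ᵥ M *ᵥ x) : M.PosDef := by
  refine .of_dotProduct_mulVec_pos
    (isHermitian_of_forall_im_star_dotProduct_mulVec_self fun x => ?_) h
  obtain rfl | hx := eq_or_ne x 0
  · simp
  · exact (Complex.pos_iff.mp (h x hx)).2.symm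

lemma isUnit_of_conjTranspose_mul_mul_eq {R : Type*} [CommRing R] [StarRing R] [Fintype m]
    [DecidableEq m] {A J : Matrix m m R} (hJ : IsUnit J) (h : Aᴴ * J * A = J) : IsUnit A := by
  rw [isUnit_iff_isUnit_det] at hJ ⊢
  rw [← h, det_mul] at hJ
  exact isUnit_of_mul_isUnit_right hJ

lemma mulVec_injective_of_rank_eq_card {K : Type*} [Field K] [Fintype n] (Λ : Matrix m n K)
    (h : Λ.rank = Fintype.card n) : Function.Injective Λ.mulVec := by
  have hsum := LinearMap.finrank_range_add_finrank_ker Λ.mulVecLin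
  rw [Module.finrank_fintype_fun_eq_card] at hsum
  have hker : LinearMap.ker Λ.mulVecLin = ⊥ :=
    Submodule.finrank_eq_zero.mp (by rw [← rank] at hsum; omega)
  exact LinearMap.ker_eq_bot.mp hker

lemma conjTranspose_sub_I_smul_mul_self [Fintype m] (X Y : Matrix m n ℂ) :
    (X - I • Y)ᴴ * (X - I • Y) = (fromRows X Y)ᴴ * fromRows X Y - I • (Xᴴ * Y - Yᴴ * X) := by
  rw [conjTranspose_fromRows_eq_fromCols_conjTranspose, fromCols_mul_fromRows]
  simp only [conjTranspose_sub, conjTranspose_smul, star_def, conj_I, Matrix.sub_mul,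
    Matrix.mul_sub, Matrix.smul_mul, Matrix.mul_smul]
  match_scalars <;> simp

lemma isUnit_sub_I_smul_of_conjTranspose_mul_eq [Fintype n] [DecidableEq n] {X Y : Matrix n n ℂ}
    (hXY : Xᴴ * Y = Yᴴ * X) (hinj : Function.Injective (fromRows X Y).mulVec) :
    IsUnit (X - I • Y) := by
  have hgram : (X - I • Y)ᴴ * (X - I • Y) = (fromRows X Y)ᴴ * fromRows X Y := by
    rw [conjTranspose_sub_I_smul_mul_self, hXY, sub_self, smul_zero, sub_zero]
  have hinj' := (PosDef.conjTranspose_mul_self _ hinj).isUnit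
  rw [← hgram, ← mulVec_injective_iff_isUnit] at hinj'
  rw [← mulVec_injective_iff_isUnit]
  refine Function.Injective.of_comp (f := (X - I • Y)ᴴ.mulVec) ?_
  simpa only [Function.comp_def, mulVec_mulVec] using hinj'

end Matrix

section IsotropicFrame

variable {m n R : Type*} [Fintype m] [Fintype n] [CommRing R] [StarRing R]

/-- For `J = Jmat d` and `n = Fin d` these are the Lagrangian frames of full rank. -/
def IsIsotropicFrame (J : Matrix m m R) (Λ : Matrix m n R) : Prop :=
  Λᴴ * J * Λ = 0 ∧ Function.Injective Λ.mulVec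

lemma IsIsotropicFrame.mul [DecidableEq m] {J A : Matrix m m R} {Λ : Matrix m n R}
    (hΛ : IsIsotropicFrame J Λ) (hA : Aᴴ * J * A = J) (hAu : IsUnit A) :
    IsIsotropicFrame J (A * Λ) := by
  refine ⟨?_, ?_⟩
  · have : (A * Λ)ᴴ * J * (A * Λ) = Λᴴ * (Aᴴ * J * A) * Λ := by
      simp only [conjTranspose_mul, Matrix.mul_assoc]
    rw [this, hA, hΛ.1]
  · have : (A * Λ).mulVec = A.mulVec ∘ Λ.mulVec := funext fun v => (mulVec_mulVec v A Λ).symm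
    rw [this]
    exact (mulVec_injective_of_isUnit hAu).comp hΛ.2

lemma isIsotropicFrame_of_mul_recurrence [DecidableEq m] {J : Matrix m m R} (hJ : IsUnit J)
    {A : ℕ → Matrix m m R} (hA : ∀ j, (A j)ᴴ * J * A j = J) {Λ : ℕ → Matrix m n R}
    (h0 : IsIsotropicFrame J (Λ 0)) (hsucc : ∀ j, Λ (j + 1) = A j * Λ j) (j : ℕ) :
    IsIsotropicFrame J (Λ j) := by
  induction j with
  | zero => exact h0
  | succ j ih => exact hsucc j ▸ ih.mul (hA j) (isUnit_of_conjTranspose_mul_mul_eq hJ (hA j))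

lemma IsIsotropicFrame.posDef_conjTranspose_mul_mul {J K : Matrix m m ℂ} {Λ : Matrix m n ℂ}
    (hΛ : IsIsotropicFrame J Λ) (hK : ∀ v ≠ 0, star v ⬝ᵥ J *ᵥ v = 0 → 0 < star v ⬝ᵥ K *ᵥ v) :
    (Λᴴ * K * Λ).PosDef := by
  have hquad (M : Matrix m m ℂ) (u : n → ℂ) :
      star u ⬝ᵥ (Λᴴ * M * Λ) *ᵥ u = star (Λ *ᵥ u) ⬝ᵥ M *ᵥ (Λ *ᵥ u) := by
    simp only [star_mulVec, mulVec_mulVec, dotProduct_mulVec, vecMul_vecMul, Matrix.mul_assoc]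
  refine posDef_of_forall_star_dotProduct_mulVec_pos fun u hu => ?_
  rw [hquad]
  refine hK _ (fun h => hu (hΛ.2 (h.trans (mulVec_zero Λ).symm))) ?_
  rw [← hquad, hΛ.1, zero_mulVec, dotProduct_zero]

end IsotropicFrame

section Jmat

open Complex

lemma Jmat_mul_self (d : ℕ) : Jmat d * Jmat d = -1 := by
  have hB : (fromBlocks 0 1 (-1) 0 : Matrix (Fin d ⊕ Fin d) (Fin d ⊕ Fin d) ℂ) *
      fromBlocks 0 1 (-1) 0 = -1 := by
    rw [fromBlocks_multiply, ← fromBlocks_one, fromBlocks_neg]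
    simp
  rw [Jmat, reindex_apply, submatrix_mul_equiv, hB]
  exact congrArg Neg.neg (submatrix_one_equiv (sumEquiv d).symm)

lemma isUnit_Jmat (d : ℕ) : IsUnit (Jmat d) :=
  ⟨⟨Jmat d, -Jmat d, by rw [mul_neg, Jmat_mul_self, neg_neg],
    by rw [neg_mul, Jmat_mul_self, neg_neg]⟩, rfl⟩

variable {d : ℕ} {n R : Type*}

def rowsTop (Λ : Matrix (Fin (2 * d)) n R) : Matrix (Fin d) n R :=
  Λ.submatrix (sumEquiv d ∘ Sum.inl) id

def rowsBottom (Λ : Matrix (Fin (2 * d)) n R) : Matrix (Fin d) n R :=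
  Λ.submatrix (sumEquiv d ∘ Sum.inr) id

lemma fromRows_rowsTop_rowsBottom (Λ : Matrix (Fin (2 * d)) n R) :
    fromRows (rowsTop Λ) (rowsBottom Λ) = Λ.submatrix (sumEquiv d) id := by
  ext (i | i) j <;> rfl

lemma conjTranspose_mul_Jmat_mul [Fintype n] (Λ : Matrix (Fin (2 * d)) n ℂ) :
    Λᴴ * Jmat d * Λ = (rowsTop Λ)ᴴ * rowsBottom Λ - (rowsBottom Λ)ᴴ * rowsTop Λ := by
  have hΛ : Λ = (fromRows (rowsTop Λ) (rowsBottom Λ)).submatrix (sumEquiv d).symm id := by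
    rw [fromRows_rowsTop_rowsBottom, submatrix_submatrix]
    simp
  conv_lhs => rw [hΛ, Jmat, reindex_apply, conjTranspose_submatrix,
    submatrix_mul_equiv _ _ _ (sumEquiv d).symm, submatrix_mul_equiv _ _ _ (sumEquiv d).symm]
  rw [conjTranspose_fromRows_eq_fromCols_conjTranspose, fromCols_mul_fromBlocks,
    fromCols_mul_fromRows]
  simp [sub_eq_neg_add]

lemma IsIsotropicFrame.isUnit_rowsTop_sub_I_smul_rowsBottom {Λ : Matrix (Fin (2 * d)) (Fin d) ℂ}
    (hΛ : IsIsotropicFrame (Jmat d) Λ) : IsUnit (rowsTop Λ - I • rowsBottom Λ) := by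
  refine isUnit_sub_I_smul_of_conjTranspose_mul_eq ?_ ?_
  · rw [← sub_eq_zero, ← conjTranspose_mul_Jmat_mul, hΛ.1]
  · rw [fromRows_rowsTop_rowsBottom]
    intro u v huv
    refine hΛ.2 (funext fun p => ?_)
    simpa [mulVec, dotProduct] using congrFun huv ((sumEquiv d).symm p)

end Jmat

/-- Monotonicity of the iterated cocycle along Lagrangian frames: for a monotonic
`C¹` family of Hermitian-symplectic cocycles, the compressed Krein form `ℳ` of any
`k`-fold iterate along a Lagrangian frame is positive definite, `X - iY` is invertible
(where `(X; Y)` are the `d×d` blocks of the iterated frame `Λ_k`), and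
`Ω = -2((X-iY)⁻¹)* ℳ (X-iY)⁻¹` is negative definite, so `tr Ω < 0`. -/
theorem monotonic_cocycle_compressed_form_posdef
    (d : ℕ) (hd : 1 ≤ d)
    (I : Set ℝ)
    (A : ℝ → ℝ → Matrix (Fin (2 * d)) (Fin (2 * d)) ℂ)
    (hsymp : ∀ t ∈ I, ∀ x : ℝ, (A t x)ᴴ * Jmat d * A t x = Jmat d)
    (hmono : ∀ t ∈ I, ∀ x : ℝ, ∀ v : Fin (2 * d) → ℂ, v ≠ 0 →
      star v ⬝ᵥ (Jmat d).mulVec v = 0 →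
      (star v ⬝ᵥ (((A t x)ᴴ * Jmat d * matDerivT I A t x).mulVec v)).im = 0 ∧
      0 < (star v ⬝ᵥ (((A t x)ᴴ * Jmat d * matDerivT I A t x).mulVec v)).re)
    (t : ℝ) (ht : t ∈ I) (α x : ℝ)
    (Λ : Matrix (Fin (2 * d)) (Fin d) ℂ)
    (hrank : Λ.rank = d) (hLag : Λᴴ * Jmat d * Λ = 0)
    (k : ℕ) (hk : 1 ≤ k)
    (Λseq : ℕ → Matrix (Fin (2 * d)) (Fin d) ℂ)
    (hΛ0 : Λseq 0 = Λ)
    (hΛs : ∀ j : ℕ, Λseq (j + 1) = A t (x + (j : ℝ) * α) * Λseq j)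
    (ℳ : Matrix (Fin d) (Fin d) ℂ)
    (hℳ : ℳ = ∑ j ∈ Finset.range k,
      (Λseq j)ᴴ *
        ((A t (x + (j : ℝ) * α))ᴴ * Jmat d * matDerivT I A t (x + (j : ℝ) * α)) *
        Λseq j)
    (X Y : Matrix (Fin d) (Fin d) ℂ)
    (hX : X = Matrix.of fun (i : Fin d) (j : Fin d) =>
      Λseq k (Fin.cast (by omega) (Fin.castAdd d i)) j)
    (hY : Y = Matrix.of fun (i : Fin d) (j : Fin d) =>
      Λseq k (Fin.cast (by omega) (Fin.natAdd d i)) j)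
    (Ω : Matrix (Fin d) (Fin d) ℂ)
    (hΩ : Ω = (-2 : ℂ) •
      (((X - Complex.I • Y)⁻¹)ᴴ * ℳ * (X - Complex.I • Y)⁻¹)) :
    ℳ.PosDef ∧
    IsUnit (X - Complex.I • Y) ∧
    (-Ω).PosDef ∧
    Ω.trace.im = 0 ∧
    Ω.trace.re < 0 := by
  have hframe : ∀ j, IsIsotropicFrame (Jmat d) (Λseq j) :=
    isIsotropicFrame_of_mul_recurrence (isUnit_Jmat d) (fun j => hsymp t ht _)
      (hΛ0 ▸ ⟨hLag, mulVec_injective_of_rank_eq_card Λ (by simpa using hrank)⟩) hΛs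
  have hℳ_pos : ℳ.PosDef := by
    rw [hℳ]
    refine posDef_sum (Finset.nonempty_range_iff.mpr (by omega)) fun j _ =>
      (hframe j).posDef_conjTranspose_mul_mul fun v hv hiso => ?_
    obtain ⟨him, hre⟩ := hmono t ht _ v hv hiso
    exact Complex.pos_iff.mpr ⟨hre, him.symm⟩
  have hunit : IsUnit (X - Complex.I • Y) := by
    subst hX hY
    exact (hframe k).isUnit_rowsTop_sub_I_smul_rowsBottom
  have hΩ_neg : (-Ω).PosDef := by
    rw [hΩ, ← neg_smul, neg_neg]
    exact (hℳ_pos.conjTranspose_mul_mul_same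
      (mulVec_injective_of_isUnit (isUnit_nonsing_inv_iff.mpr hunit))).smul two_pos
  have : Nonempty (Fin d) := ⟨⟨0, hd⟩⟩
  have htrace : Ω.trace < 0 := by
    simpa [trace_neg] using hΩ_neg.trace_pos
  exact ⟨hℳ_pos, hunit, hΩ_neg, (Complex.neg_iff.mp htrace).2, (Complex.neg_iff.mp htrace).1⟩
end

section
/- Let A ∈ HSp(2d) and let Λ_t = (X_t; Y_t), t ∈ (a,b), be a C¹ family of Lagrangian frames (in d×d blocks) such that ℳ(t) = Λ_t* 𝒥_{2d} ∂_tΛ_t is positive definite (respectively negative definite) for each t. Write AΛ_t = (X_{A,t}; Y_{A,t}) in d×d blocks. Then: (AΛ_t)* 𝒥_{2d} ∂_t(AΛ_t) = ℳ(t); the matrices X_t − iY_t and X_{A,t} − iY_{A,t} are invertible; and the two real numbers tr(((X_t−iY_t)^{-1})* ℳ(t) (X_t−iY_t)^{-1}) and tr(((X_{A,t}−iY_{A,t})^{-1})* ℳ(t) (X_{A,t}−iY_{A,t})^{-1}) are both positive (respectively both negative). -/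
/-! Writing `Λ = (X; Y)`, one has `(X - iY)* (X - iY) = Λ*Λ - i Λ*𝒥Λ`, so for a Lagrangian frame
`X - iY` has the same rank `d` as `Λ` and is invertible. A matrix `A ∈ HSp(2d)` is invertible and
preserves the form `(P, Q) ↦ P*𝒥Q`; hence `AΛ` is again a Lagrangian frame and `ℳ` is unchanged.
Finally a congruence `C*ℳC` by an invertible `C` is definite of the same sign as `ℳ`, and so is
its trace. -/

open scoped BigOperators Matrix ComplexOrder

/-- Entrywise derivative of a matrix-valued function of a real variable. -/
noncomputable def matDeriv {m n : ℕ} (Q : ℝ → Matrix (Fin m) (Fin n) ℂ) (t : ℝ) :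
    Matrix (Fin m) (Fin n) ℂ :=
  Matrix.of fun i j => deriv (fun s => Q s i j) t

open Matrix

section Blocks

variable {d : ℕ} {ι R : Type*}

def upperBlock (P : Matrix (Fin (2 * d)) ι R) : Matrix (Fin d) ι R :=
  (P.submatrix (sumEquiv d) id).toRows₁

def lowerBlock (P : Matrix (Fin (2 * d)) ι R) : Matrix (Fin d) ι R :=
  (P.submatrix (sumEquiv d) id).toRows₂

theorem submatrix_sumEquiv_eq_fromRows (P : Matrix (Fin (2 * d)) ι R) :
    P.submatrix (sumEquiv d) id = fromRows (upperBlock P) (lowerBlock P) :=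
  (fromRows_toRows _).symm

end Blocks

theorem conjTranspose_mul_reindex_mul {m n ι R : Type*} [Fintype m] [Fintype n] [Semiring R]
    [Star R] (e : m ≃ n) (B : Matrix m m R) (P Q : Matrix n ι R) :
    Pᴴ * reindex e e B * Q = (P.submatrix e id)ᴴ * B * Q.submatrix e id := by
  have hP : Pᴴ = (P.submatrix e id)ᴴ.submatrix id e.symm := by ext; simp [conjTranspose_apply]
  have hQ : Q = (Q.submatrix e id).submatrix e.symm id := by ext; simp
  conv_lhs => rw [hP, hQ]
  rw [reindex_apply, submatrix_mul_equiv, submatrix_mul_equiv, submatrix_id_id]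

section Lagrangian

variable {d : ℕ} {ι : Type*}

theorem conjTranspose_mul_Jmat_mul_s17 (P Q : Matrix (Fin (2 * d)) ι ℂ) :
    Pᴴ * Jmat d * Q = (upperBlock P)ᴴ * lowerBlock Q - (lowerBlock P)ᴴ * upperBlock Q := by
  rw [Jmat, conjTranspose_mul_reindex_mul, submatrix_sumEquiv_eq_fromRows,
    submatrix_sumEquiv_eq_fromRows, conjTranspose_fromRows_eq_fromCols_conjTranspose,
    fromCols_mul_fromBlocks, fromCols_mul_fromRows]
  simp [sub_eq_add_neg, add_comm]

theorem conjTranspose_mul_eq_blocks (P Q : Matrix (Fin (2 * d)) ι ℂ) :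
    Pᴴ * Q = (upperBlock P)ᴴ * upperBlock Q + (lowerBlock P)ᴴ * lowerBlock Q := by
  have h := conjTranspose_mul_reindex_mul (sumEquiv d) 1 P Q
  rw [reindex_apply, submatrix_one_equiv, Matrix.mul_one, Matrix.mul_one] at h
  rw [h, submatrix_sumEquiv_eq_fromRows, submatrix_sumEquiv_eq_fromRows,
    conjTranspose_fromRows_eq_fromCols_conjTranspose, fromCols_mul_fromRows]

theorem cayley_conjTranspose_mul_self (P : Matrix (Fin (2 * d)) ι ℂ) :
    (upperBlock P - Complex.I • lowerBlock P)ᴴ * (upperBlock P - Complex.I • lowerBlock P) =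
      Pᴴ * P - Complex.I • (Pᴴ * Jmat d * P) := by
  rw [conjTranspose_mul_eq_blocks, conjTranspose_mul_Jmat_mul_s17]
  simp only [conjTranspose_sub, conjTranspose_smul, Complex.star_def, Complex.conj_I,
    Matrix.sub_mul, Matrix.mul_sub, Matrix.smul_mul, Matrix.mul_smul]
  match_scalars <;> simp

theorem isUnit_of_rank_eq_card {n K : Type*} [Fintype n] [DecidableEq n] [Field K]
    {C : Matrix n n K} (h : C.rank = Fintype.card n) : IsUnit C := by
  rw [← mulVec_surjective_iff_isUnit]
  change Function.Surjective C.mulVecLin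
  rw [← LinearMap.range_eq_top]
  exact Submodule.eq_top_of_finrank_eq (by rwa [Module.finrank_fintype_fun_eq_card])

theorem isUnit_cayley_of_lagrangian {P : Matrix (Fin (2 * d)) (Fin d) ℂ} (hrank : P.rank = d)
    (hLag : Pᴴ * Jmat d * P = 0) : IsUnit (upperBlock P - Complex.I • lowerBlock P) :=
  isUnit_of_rank_eq_card <| by
    rw [← rank_conjTranspose_mul_self, cayley_conjTranspose_mul_self, hLag, smul_zero, sub_zero,
      rank_conjTranspose_mul_self, hrank, Fintype.card_fin]

end Lagrangian

theorem conjTranspose_mul_mul_mul_eq_of_preserves {m n : Type*} [Fintype m] {R : Type*}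
    [Semiring R] [StarRing R] {A J : Matrix m m R} (hA : Aᴴ * J * A = J) (P Q : Matrix m n R) :
    (A * P)ᴴ * J * (A * Q) = Pᴴ * J * Q := by
  calc (A * P)ᴴ * J * (A * Q) = Pᴴ * (Aᴴ * J * A) * Q := by
        simp only [conjTranspose_mul, Matrix.mul_assoc]
    _ = Pᴴ * J * Q := by rw [hA]

theorem Jmat_conjTranspose_mul_self (d : ℕ) : (Jmat d)ᴴ * Jmat d = 1 := by
  rw [Jmat, reindex_apply, conjTranspose_submatrix, submatrix_mul_equiv, fromBlocks_conjTranspose,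
    fromBlocks_multiply]
  simp [fromBlocks_one]

theorem isUnit_det_of_preserves_Jmat {d : ℕ} {A : Matrix (Fin (2 * d)) (Fin (2 * d)) ℂ}
    (hA : Aᴴ * Jmat d * A = Jmat d) : IsUnit A.det :=
  isUnit_det_of_left_inverse (B := (Jmat d)ᴴ * Aᴴ * Jmat d) <| by
    rw [Matrix.mul_assoc, Matrix.mul_assoc, ← Matrix.mul_assoc Aᴴ, hA, Jmat_conjTranspose_mul_self]

theorem matDeriv_mul_left {k m n : ℕ} (A : Matrix (Fin k) (Fin m) ℂ)
    {Λ : ℝ → Matrix (Fin m) (Fin n) ℂ} {t : ℝ}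
    (hΛ : ∀ i j, DifferentiableAt ℝ (fun s => Λ s i j) t) :
    matDeriv (fun s => A * Λ s) t = A * matDeriv Λ t := by
  ext i j
  simp only [matDeriv, of_apply, mul_apply]
  rw [deriv_fun_sum fun k _ => (hΛ k j).const_mul _]
  exact Finset.sum_congr rfl fun k _ => deriv_const_mul _ (hΛ k j)

section Trace

variable {n R : Type*} [Fintype n] [Nonempty n] [DecidableEq n] [Ring R] [PartialOrder R]
  [StarRing R] [IsOrderedAddMonoid R] [Nontrivial R] {M C : Matrix n n R}

theorem trace_conjTranspose_mul_mul_pos (hM : M.PosDef) (hC : IsUnit C) :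
    0 < (Cᴴ * M * C).trace :=
  (hM.conjTranspose_mul_mul_same (mulVec_injective_of_isUnit hC)).trace_pos

theorem trace_conjTranspose_mul_mul_neg (hM : (-M).PosDef) (hC : IsUnit C) :
    (Cᴴ * M * C).trace < 0 := by
  simpa [Matrix.mul_neg, Matrix.neg_mul, trace_neg] using trace_conjTranspose_mul_mul_pos hM hC

end Trace

/-- Invariance of monotonicity of Lagrangian paths under the Hermitian-symplectic
group: if `A ∈ HSp(2d)` and `Λ_t` is a `C¹` family of Lagrangian frames with
`ℳ(t) = Λ_t* 𝒥 ∂_tΛ_t` definite, then `(AΛ_t)* 𝒥 ∂_t(AΛ_t) = ℳ(t)`, the Cayley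
denominators of `Λ_t` and `AΛ_t` are invertible, and the traces of the compressed
forms have the same (strict) sign as `ℳ(t)`. -/
theorem hermitian_symplectic_preserves_monotone_lagrangian
    (d : ℕ) (hd : 1 ≤ d)
    (a b : ℝ)
    (A : Matrix (Fin (2 * d)) (Fin (2 * d)) ℂ)
    (hA : Aᴴ * Jmat d * A = Jmat d)
    (Λ : ℝ → Matrix (Fin (2 * d)) (Fin d) ℂ)
    (hC1 : ∀ (i : Fin (2 * d)) (j : Fin d),
      ContDiffOn ℝ 1 (fun t => Λ t i j) (Set.Ioo a b))
    (hrank : ∀ t ∈ Set.Ioo a b, (Λ t).rank = d)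
    (hLag : ∀ t ∈ Set.Ioo a b, (Λ t)ᴴ * Jmat d * Λ t = 0)
    (ℳ : ℝ → Matrix (Fin d) (Fin d) ℂ)
    (hℳ : ∀ t : ℝ, ℳ t = (Λ t)ᴴ * Jmat d * matDeriv Λ t)
    (X Y XA YA : ℝ → Matrix (Fin d) (Fin d) ℂ)
    (hX : ∀ t, X t = Matrix.of fun (i : Fin d) (j : Fin d) =>
      Λ t (Fin.cast (by omega) (Fin.castAdd d i)) j)
    (hY : ∀ t, Y t = Matrix.of fun (i : Fin d) (j : Fin d) =>
      Λ t (Fin.cast (by omega) (Fin.natAdd d i)) j)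
    (hXA : ∀ t, XA t = Matrix.of fun (i : Fin d) (j : Fin d) =>
      (A * Λ t) (Fin.cast (by omega) (Fin.castAdd d i)) j)
    (hYA : ∀ t, YA t = Matrix.of fun (i : Fin d) (j : Fin d) =>
      (A * Λ t) (Fin.cast (by omega) (Fin.natAdd d i)) j) :
    ∀ t ∈ Set.Ioo a b,
      (A * Λ t)ᴴ * Jmat d * matDeriv (fun s => A * Λ s) t = ℳ t ∧
      IsUnit (X t - Complex.I • Y t) ∧
      IsUnit (XA t - Complex.I • YA t) ∧
      ((∀ s ∈ Set.Ioo a b, (ℳ s).PosDef) →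
        0 < ((((X t - Complex.I • Y t)⁻¹)ᴴ * ℳ t *
              (X t - Complex.I • Y t)⁻¹).trace).re ∧
        ((((X t - Complex.I • Y t)⁻¹)ᴴ * ℳ t *
              (X t - Complex.I • Y t)⁻¹).trace).im = 0 ∧
        0 < ((((XA t - Complex.I • YA t)⁻¹)ᴴ * ℳ t *
              (XA t - Complex.I • YA t)⁻¹).trace).re ∧
        ((((XA t - Complex.I • YA t)⁻¹)ᴴ * ℳ t *
              (XA t - Complex.I • YA t)⁻¹).trace).im = 0) ∧
      ((∀ s ∈ Set.Ioo a b, (-(ℳ s)).PosDef) →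
        ((((X t - Complex.I • Y t)⁻¹)ᴴ * ℳ t *
              (X t - Complex.I • Y t)⁻¹).trace).re < 0 ∧
        ((((X t - Complex.I • Y t)⁻¹)ᴴ * ℳ t *
              (X t - Complex.I • Y t)⁻¹).trace).im = 0 ∧
        ((((XA t - Complex.I • YA t)⁻¹)ᴴ * ℳ t *
              (XA t - Complex.I • YA t)⁻¹).trace).re < 0 ∧
        ((((XA t - Complex.I • YA t)⁻¹)ᴴ * ℳ t *
              (XA t - Complex.I • YA t)⁻¹).trace).im = 0) := by
  intro t ht
  have hΛ : ∀ i j, DifferentiableAt ℝ (fun s => Λ s i j) t := fun i j =>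
    ((hC1 i j).differentiableOn one_ne_zero).differentiableAt (isOpen_Ioo.mem_nhds ht)
  have hC : IsUnit (X t - Complex.I • Y t) := by
    rw [show X t = upperBlock (Λ t) from hX t, show Y t = lowerBlock (Λ t) from hY t]
    exact isUnit_cayley_of_lagrangian (hrank t ht) (hLag t ht)
  have hCA : IsUnit (XA t - Complex.I • YA t) := by
    rw [show XA t = upperBlock (A * Λ t) from hXA t, show YA t = lowerBlock (A * Λ t) from hYA t]
    refine isUnit_cayley_of_lagrangian ?_ ?_
    · rw [rank_mul_eq_right_of_isUnit_det _ _ (isUnit_det_of_preserves_Jmat hA), hrank t ht]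
    · rw [conjTranspose_mul_mul_mul_eq_of_preserves hA, hLag t ht]
  have : Nonempty (Fin d) := ⟨⟨0, hd⟩⟩
  have hCinv := isUnit_nonsing_inv_iff.mpr hC
  have hCAinv := isUnit_nonsing_inv_iff.mpr hCA
  refine ⟨?_, hC, hCA, fun hpos => ?_, fun hneg => ?_⟩
  · rw [matDeriv_mul_left A hΛ, conjTranspose_mul_mul_mul_eq_of_preserves hA, hℳ]
  · obtain ⟨h₁, h₂⟩ := Complex.pos_iff.mp (trace_conjTranspose_mul_mul_pos (hpos t ht) hCinv)
    obtain ⟨h₃, h₄⟩ := Complex.pos_iff.mp (trace_conjTranspose_mul_mul_pos (hpos t ht) hCAinv)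
    exact ⟨h₁, h₂.symm, h₃, h₄.symm⟩
  · obtain ⟨h₁, h₂⟩ := Complex.neg_iff.mp (trace_conjTranspose_mul_mul_neg (hneg t ht) hCinv)
    obtain ⟨h₃, h₄⟩ := Complex.neg_iff.mp (trace_conjTranspose_mul_mul_neg (hneg t ht) hCAinv)
    exact ⟨h₁, h₂, h₃, h₄⟩
end
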